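/- arXiv:1610.06973 — 5 statements merged into one kernel-verified Lean document; each statement's English description precedes it below -/
import Mathlib

section
/- Let Ω = (0,L₁)×(0,L₂) and let 𝖿 : ℝ² → ℝ be a smooth, Ω-periodic, even function. Then there exists a constant C₂ > 0 depending only on 𝖿, L₁ and L₂ (not on the grid) such that for every grid (integers m, n ≥ 1 and h > 0 with m·h = L₁ and n·h = L₂), with f the vertex grid restriction f_{k,l} = 𝖿((k−1/2)h, (l−1/2)h), every pair of periodic grid functions φ, ψ, and every α > 0: −2h²⟨[f⋆ψ], Δ_h φ⟩ ≤ (C₂/α)‖ψ‖₂² + α‖∇_h φ‖₂². -/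
open scoped BigOperators
open MeasureTheory

/-! Discrete setting: periodic grid functions on an `m × n` periodic grid are maps
`ZMod m × ZMod n → ℝ`. -/

/-- Discrete inner product `⟨φ,ψ⟩ = Σ_{i,j} φ_{i,j} ψ_{i,j}`. -/
noncomputable def gip {m n : ℕ} [NeZero m] [NeZero n] (φ ψ : ZMod m × ZMod n → ℝ) : ℝ :=
  ∑ p : ZMod m × ZMod n, φ p * ψ p

/-- Discrete periodic convolution `[f⋆φ]_{i,j} = h² Σ_{k,l} f_{k,l} φ_{i−k,j−l}`. -/
noncomputable def gconv {m n : ℕ} [NeZero m] [NeZero n] (h : ℝ) (f φ : ZMod m × ZMod n → ℝ) :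
    ZMod m × ZMod n → ℝ :=
  fun p => h ^ 2 * ∑ q : ZMod m × ZMod n, f q * φ (p.1 - q.1, p.2 - q.2)

/-- `[f⋆1] = h² Σ_{k,l} f_{k,l}`. -/
noncomputable def gconvOne {m n : ℕ} [NeZero m] [NeZero n] (h : ℝ) (f : ZMod m × ZMod n → ℝ) : ℝ :=
  h ^ 2 * ∑ q : ZMod m × ZMod n, f q

/-- A kernel is even when `f_{k,l} = f_{−k,−l}`. -/
def EvenKer {m n : ℕ} (f : ZMod m × ZMod n → ℝ) : Prop :=
  ∀ p : ZMod m × ZMod n, f (-p.1, -p.2) = f p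

/-- `‖φ‖₂² = h² Σ_{i,j} φ_{i,j}²`. -/
noncomputable def norm2sq {m n : ℕ} [NeZero m] [NeZero n] (h : ℝ) (φ : ZMod m × ZMod n → ℝ) : ℝ :=
  h ^ 2 * ∑ p : ZMod m × ZMod n, (φ p) ^ 2

/-- `‖φ‖₂ = (h² Σ_{i,j} φ_{i,j}²)^{1/2}`. -/
noncomputable def norm2 {m n : ℕ} [NeZero m] [NeZero n] (h : ℝ) (φ : ZMod m × ZMod n → ℝ) : ℝ :=
  Real.sqrt (norm2sq h φ)

/-- `‖φ‖₄⁴ = h² Σ_{i,j} φ_{i,j}⁴`. -/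
noncomputable def norm4p4 {m n : ℕ} [NeZero m] [NeZero n] (h : ℝ) (φ : ZMod m × ZMod n → ℝ) : ℝ :=
  h ^ 2 * ∑ p : ZMod m × ZMod n, (φ p) ^ 4

/-- `‖φ‖₄ = (h² Σ_{i,j} |φ_{i,j}|⁴)^{1/4}`. -/
noncomputable def norm4 {m n : ℕ} [NeZero m] [NeZero n] (h : ℝ) (φ : ZMod m × ZMod n → ℝ) : ℝ :=
  (norm4p4 h φ) ^ ((1 : ℝ) / 4)

/-- `‖φ‖_∞ = max_{i,j} |φ_{i,j}|`. -/
noncomputable def normInf {m n : ℕ} [NeZero m] [NeZero n] (φ : ZMod m × ZMod n → ℝ) : ℝ :=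
  ⨆ p : ZMod m × ZMod n, |φ p|

/-- Five-point discrete Laplacian. -/
noncomputable def glap {m n : ℕ} (h : ℝ) (φ : ZMod m × ZMod n → ℝ) : ZMod m × ZMod n → ℝ :=
  fun p => (φ (p.1 + 1, p.2) + φ (p.1 - 1, p.2) + φ (p.1, p.2 + 1) + φ (p.1, p.2 - 1) - 4 * φ p) / h ^ 2

/-- `‖∇_h φ‖₂² = Σ_{i,j} [(φ_{i+1,j}−φ_{i,j})² + (φ_{i,j+1}−φ_{i,j})²]`. -/
noncomputable def gradNormSq {m n : ℕ} [NeZero m] [NeZero n] (φ : ZMod m × ZMod n → ℝ) : ℝ :=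
  ∑ p : ZMod m × ZMod n, ((φ (p.1 + 1, p.2) - φ p) ^ 2 + (φ (p.1, p.2 + 1) - φ p) ^ 2)

/-- `‖∇_h φ‖_∞`. -/
noncomputable def gradNormInf {m n : ℕ} [NeZero m] [NeZero n] (h : ℝ) (φ : ZMod m × ZMod n → ℝ) : ℝ :=
  ⨆ p : ZMod m × ZMod n, max (|φ (p.1 + 1, p.2) - φ p| / h) (|φ (p.1, p.2 + 1) - φ p| / h)

/-- Pointwise nonlinear term `η(a,b) = (1/4)(a²+b²)(a+b)`. -/
noncomputable def etaNL {m n : ℕ} (a b : ZMod m × ZMod n → ℝ) : ZMod m × ZMod n → ℝ :=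
  fun p => (1 / 4) * ((a p) ^ 2 + (b p) ^ 2) * (a p + b p)

/-- The chemical potential
`w^{k+1/2} = η(φᵏ,φ^{k+1}) + B_c φ^{k+1/2} − B_e φ̂^{k+1/2} − [J⋆φ̂^{k+1/2}]`,
where `φ^{k+1/2} = (φᵏ+φ^{k+1})/2` and `φ̂^{k+1/2} = (3/2)φᵏ − (1/2)φ^{k−1}`. -/
noncomputable def chemPot {m n : ℕ} [NeZero m] [NeZero n] (h Bc Be : ℝ)
    (J φold φ φnew : ZMod m × ZMod n → ℝ) : ZMod m × ZMod n → ℝ :=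
  fun p => etaNL φ φnew p + Bc * ((1 / 2) * (φ p + φnew p))
    - Be * ((3 / 2) * φ p - (1 / 2) * φold p)
    - gconv h J (fun q => (3 / 2) * φ q - (1 / 2) * φold q) p

/-- Discrete energy
`F(φ) = (1/4)‖φ‖₄⁴ + ((γ_c−γ_e)/2)‖φ‖₂² + ([J⋆1]/2)‖φ‖₂² − (h²/2)⟨φ,[J⋆φ]⟩`. -/
noncomputable def Fdisc {m n : ℕ} [NeZero m] [NeZero n] (h γc γe : ℝ)
    (J φ : ZMod m × ZMod n → ℝ) : ℝ :=
  (1 / 4) * norm4p4 h φ + ((γc - γe) / 2) * norm2sq h φ + (gconvOne h J / 2) * norm2sq h φ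
    - (h ^ 2 / 2) * gip φ (gconv h J φ)

/-- Discrete pseudo energy
`ℰ(φ,ψ) = F(ψ) + ((B_c+B_e)/4)‖ψ−φ‖₂² + (h²/4)⟨[J⋆(ψ−φ)], ψ−φ⟩`. -/
noncomputable def pseudoE {m n : ℕ} [NeZero m] [NeZero n] (h γc γe Bc Be : ℝ)
    (J φ ψ : ZMod m × ZMod n → ℝ) : ℝ :=
  Fdisc h γc γe J ψ + ((Bc + Be) / 4) * norm2sq h (ψ - φ)
    + (h ^ 2 / 4) * gip (gconv h J (ψ - φ)) (ψ - φ)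

/-! Continuous setting: `Ω = (0,L₁) × (0,L₂)` with periodic boundary conditions. -/

/-- The domain `Ω = (0,L₁) × (0,L₂)`. -/
noncomputable def box (L₁ L₂ : ℝ) : Set (ℝ × ℝ) := Set.Ioo 0 L₁ ×ˢ Set.Ioo 0 L₂

/-- Periodic convolution `(J∗φ)(x) = ∫_Ω J(x−y) φ(y) dy`. -/
noncomputable def cconv (L₁ L₂ : ℝ) (J φ : ℝ × ℝ → ℝ) : ℝ × ℝ → ℝ :=
  fun x => ∫ y in box L₁ L₂, J (x.1 - y.1, x.2 - y.2) * φ y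

/-- `J∗1 = ∫_Ω J(x) dx`. -/
noncomputable def cJone (L₁ L₂ : ℝ) (J : ℝ × ℝ → ℝ) : ℝ := ∫ x in box L₁ L₂, J x

/-- `Ω`-periodicity of a function on `ℝ²`. -/
def PerFun (L₁ L₂ : ℝ) (φ : ℝ × ℝ → ℝ) : Prop :=
  ∀ x : ℝ × ℝ, φ (x.1 + L₁, x.2) = φ x ∧ φ (x.1, x.2 + L₂) = φ x

/-- The nonlocal energy
`E(φ) = (1/4)‖φ‖⁴_{L⁴} + ((γ_c − γ_e + J∗1)/2)‖φ‖²_{L²} − (1/2)⟨φ, J∗φ⟩_{L²}`. -/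
noncomputable def cE (L₁ L₂ γc γe : ℝ) (J φ : ℝ × ℝ → ℝ) : ℝ :=
  (1 / 4) * (∫ x in box L₁ L₂, (φ x) ^ 4)
  + ((γc - γe + cJone L₁ L₂ J) / 2) * (∫ x in box L₁ L₂, (φ x) ^ 2)
  - (1 / 2) * (∫ x in box L₁ L₂, φ x * cconv L₁ L₂ J φ x)

/-- The grid point `p_{i,j} = ((i−1/2)h, (j−1/2)h)`. -/
noncomputable def gridPt {m n : ℕ} (h : ℝ) (p : ZMod m × ZMod n) : ℝ × ℝ :=
  (((p.1.val : ℝ) - 1 / 2) * h, ((p.2.val : ℝ) - 1 / 2) * h)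

/-- Grid restriction of a continuous function. -/
noncomputable def gridRestrict (m n : ℕ) (h : ℝ) (F : ℝ × ℝ → ℝ) : ZMod m × ZMod n → ℝ :=
  fun p => F (gridPt h p)

/-- The continuous Laplacian on `ℝ²` (as iterated partial derivatives). -/
noncomputable def clap (g : ℝ × ℝ → ℝ) (x : ℝ × ℝ) : ℝ :=
  deriv (fun a => deriv (fun b => g (b, x.2)) a) x.1
    + deriv (fun a => deriv (fun b => g (x.1, b)) a) x.2

set_option linter.unusedSectionVars false
section gridAux
variable {m n : ℕ} [NeZero m] [NeZero n]

private lemma sum_shift (e : ZMod m × ZMod n) (f : ZMod m × ZMod n → ℝ) :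
    ∑ p : ZMod m × ZMod n, f (p + e) = ∑ p : ZMod m × ZMod n, f p := by
  simpa using Equiv.sum_comp (Equiv.addRight e) f

private lemma sbp (e : ZMod m × ZMod n) (g φ : ZMod m × ZMod n → ℝ) :
    ∑ p : ZMod m × ZMod n, g p * (φ (p + e) + φ (p - e) - 2 * φ p)
      = -∑ p : ZMod m × ZMod n, (g (p + e) - g p) * (φ (p + e) - φ p) := by
  have h1 : ∑ p : ZMod m × ZMod n, g (p + e) * φ (p + e)
      = ∑ p : ZMod m × ZMod n, g p * φ p := sum_shift e (fun p => g p * φ p)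
  have h2 : ∑ p : ZMod m × ZMod n, g p * φ (p - e)
      = ∑ p : ZMod m × ZMod n, g (p + e) * φ p := by
    have := sum_shift (-e) (fun p => g (p + e) * φ p)
    simpa [sub_eq_add_neg] using this
  have l1 : (∑ p : ZMod m × ZMod n, g p * (φ (p + e) + φ (p - e) - 2 * φ p))
      = (∑ p : ZMod m × ZMod n, g p * φ (p + e)) + (∑ p : ZMod m × ZMod n, g p * φ (p - e))
        - 2 * ∑ p : ZMod m × ZMod n, g p * φ p := by
    rw [Finset.mul_sum, ← Finset.sum_add_distrib, ← Finset.sum_sub_distrib]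
    exact Finset.sum_congr rfl fun p _ => by ring
  have r1 : (∑ p : ZMod m × ZMod n, (g (p + e) - g p) * (φ (p + e) - φ p))
      = (∑ p : ZMod m × ZMod n, g (p + e) * φ (p + e))
        - (∑ p : ZMod m × ZMod n, g (p + e) * φ p)
        - (∑ p : ZMod m × ZMod n, g p * φ (p + e))
        + ∑ p : ZMod m × ZMod n, g p * φ p := by
    rw [← Finset.sum_sub_distrib, ← Finset.sum_sub_distrib, ← Finset.sum_add_distrib]
    exact Finset.sum_congr rfl fun p _ => by ring
  rw [l1, r1, h1, h2]; ring

private lemma add_e1 (p : ZMod m × ZMod n) :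
    p + ((1 : ZMod m), (0 : ZMod n)) = (p.1 + 1, p.2) := by ext <;> simp

private lemma sub_e1 (p : ZMod m × ZMod n) :
    p - ((1 : ZMod m), (0 : ZMod n)) = (p.1 - 1, p.2) := by ext <;> simp

private lemma add_e2 (p : ZMod m × ZMod n) :
    p + ((0 : ZMod m), (1 : ZMod n)) = (p.1, p.2 + 1) := by ext <;> simp

private lemma sub_e2 (p : ZMod m × ZMod n) :
    p - ((0 : ZMod m), (1 : ZMod n)) = (p.1, p.2 - 1) := by ext <;> simp

private lemma lap_parts (h : ℝ) (hh : h ≠ 0) (g φ : ZMod m × ZMod n → ℝ) :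
    h ^ 2 * gip g (glap h φ)
      = -∑ p : ZMod m × ZMod n, ((g (p.1 + 1, p.2) - g p) * (φ (p.1 + 1, p.2) - φ p)
          + (g (p.1, p.2 + 1) - g p) * (φ (p.1, p.2 + 1) - φ p)) := by
  have key : h ^ 2 * gip g (glap h φ)
      = (∑ p : ZMod m × ZMod n, g p * (φ (p.1 + 1, p.2) + φ (p.1 - 1, p.2) - 2 * φ p))
        + ∑ p : ZMod m × ZMod n, g p * (φ (p.1, p.2 + 1) + φ (p.1, p.2 - 1) - 2 * φ p) := by
    unfold gip glap
    rw [Finset.mul_sum, ← Finset.sum_add_distrib]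
    refine Finset.sum_congr rfl fun p _ => ?_
    field_simp
    ring
  have s1 := sbp ((1 : ZMod m), (0 : ZMod n)) g φ
  have s2 := sbp ((0 : ZMod m), (1 : ZMod n)) g φ
  simp only [add_e1, sub_e1] at s1
  simp only [add_e2, sub_e2] at s2
  rw [key, s1, s2, ← neg_add, ← Finset.sum_add_distrib]

private lemma gconv_eq (h : ℝ) (f ψ : ZMod m × ZMod n → ℝ) (p : ZMod m × ZMod n) :
    gconv h f ψ p = h ^ 2 * ∑ q : ZMod m × ZMod n, f (p.1 - q.1, p.2 - q.2) * ψ q := by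
  unfold gconv
  congr 1
  have := Equiv.sum_comp (Equiv.subLeft p)
    (fun q : ZMod m × ZMod n => f q * ψ (p.1 - q.1, p.2 - q.2))
  simp only [Equiv.subLeft_apply] at this
  rw [← this]
  refine Finset.sum_congr rfl fun q _ => ?_
  have h1 : (p - q).1 = p.1 - q.1 := rfl
  have h2 : (p - q).2 = p.2 - q.2 := rfl
  rw [h1, h2, sub_sub_cancel, sub_sub_cancel]
  rfl

end gridAux
section wrapAux
variable {m n : ℕ} [NeZero m] [NeZero n]

private lemma val_shift_exists (a : ZMod m) :
    ∃ k : ℤ, ((a + 1).val : ℤ) = (a.val : ℤ) + 1 + k * m := by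
  have h1 : ((a.val + 1 : ℕ) : ZMod m) = (((a + 1).val : ℕ) : ZMod m) := by
    push_cast
    simp [ZMod.natCast_val, ZMod.cast_id]
  have h2 : (a.val + 1) ≡ (a + 1).val [MOD m] := (ZMod.natCast_eq_natCast_iff _ _ _).mp h1
  obtain ⟨k, hk⟩ := h2.dvd
  refine ⟨k, ?_⟩
  push_cast at hk ⊢
  linarith

private lemma wrap1 {L₁ L₂ : ℝ} (F : ℝ × ℝ → ℝ) (hFper : PerFun L₁ L₂ F) (h : ℝ)
    (hm : (m : ℝ) * h = L₁) (r : ZMod m × ZMod n) :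
    gridRestrict m n h F (r.1 + 1, r.2) = F ((gridPt h r).1 + h, (gridPt h r).2) := by
  obtain ⟨k, hk⟩ := val_shift_exists r.1
  have hper : Function.Periodic (fun x => F (x, (gridPt h r).2)) L₁ := fun x => (hFper (x, _)).1
  have hkr : (((r.1 + 1).val : ℝ)) = (r.1.val : ℝ) + 1 + (k : ℝ) * m := by
    exact_mod_cast congrArg (Int.cast : ℤ → ℝ) hk
  have hx : (((r.1 + 1).val : ℝ) - 1 / 2) * h = ((gridPt h r).1 + h) + (k : ℝ) * L₁ := by
    rw [hkr, ← hm]; unfold gridPt; ring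
  show F ((((r.1 + 1).val : ℝ) - 1 / 2) * h, ((r.2.val : ℝ) - 1 / 2) * h) = _
  rw [show (((r.2.val : ℝ) - 1 / 2) * h) = (gridPt h r).2 from rfl, hx]
  exact (hper.int_mul k) ((gridPt h r).1 + h)

private lemma wrap2 {L₁ L₂ : ℝ} (F : ℝ × ℝ → ℝ) (hFper : PerFun L₁ L₂ F) (h : ℝ)
    (hn : (n : ℝ) * h = L₂) (r : ZMod m × ZMod n) :
    gridRestrict m n h F (r.1, r.2 + 1) = F ((gridPt h r).1, (gridPt h r).2 + h) := by
  obtain ⟨k, hk⟩ := val_shift_exists r.2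
  have hper : Function.Periodic (fun y => F ((gridPt h r).1, y)) L₂ := fun y => (hFper (_, y)).2
  have hkr : (((r.2 + 1).val : ℝ)) = (r.2.val : ℝ) + 1 + (k : ℝ) * n := by
    exact_mod_cast congrArg (Int.cast : ℤ → ℝ) hk
  have hx : (((r.2 + 1).val : ℝ) - 1 / 2) * h = ((gridPt h r).2 + h) + (k : ℝ) * L₂ := by
    rw [hkr, ← hn]; unfold gridPt; ring
  show F (((r.1.val : ℝ) - 1 / 2) * h, (((r.2 + 1).val : ℝ) - 1 / 2) * h) = _
  rw [show (((r.1.val : ℝ) - 1 / 2) * h) = (gridPt h r).1 from rfl, hx]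
  exact (hper.int_mul k) ((gridPt h r).2 + h)

end wrapAux
private lemma young (α a b : ℝ) (hα : 0 < α) : 2 * (a * b) ≤ a ^ 2 / α + α * b ^ 2 := by
  have h0 : 0 ≤ (a - α * b) ^ 2 / α := div_nonneg (sq_nonneg _) hα.le
  have h1 : a ^ 2 / α + α * b ^ 2 - 2 * (a * b) = (a - α * b) ^ 2 / α := by
    field_simp; ring
  linarith
set_option maxHeartbeats 2000000 in
/-- grid-independent estimate `−2h²⟨[f⋆ψ], Δ_h φ⟩ ≤ (C₂/α)‖ψ‖₂² + α‖∇_h φ‖₂²`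
for the grid restriction of a smooth periodic even kernel. -/
theorem stmt2 (L₁ L₂ : ℝ) (hL₁ : 0 < L₁) (hL₂ : 0 < L₂)
    (F : ℝ × ℝ → ℝ) (hFsmooth : ContDiff ℝ (⊤ : ℕ∞) F) (hFper : PerFun L₁ L₂ F)
    (hFeven : ∀ x : ℝ × ℝ, F (-x.1, -x.2) = F x) :
    ∃ C₂ > (0:ℝ), ∀ (m n : ℕ) [NeZero m] [NeZero n] (h : ℝ), 0 < h →
      (m : ℝ) * h = L₁ → (n : ℝ) * h = L₂ →
      ∀ φ ψ : ZMod m × ZMod n → ℝ, ∀ α : ℝ, 0 < α →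
        -2 * h ^ 2 * gip (gconv h (gridRestrict m n h F) ψ) (glap h φ)
          ≤ C₂ / α * norm2sq h ψ + α * gradNormSq φ := by
  classical
  have hFdiff : Differentiable ℝ F := hFsmooth.differentiable (by simp)
  set R : ℝ := 2 * (L₁ + L₂) with hRdef
  obtain ⟨C₀, hC₀⟩ := (isCompact_closedBall (0 : ℝ × ℝ) R).exists_bound_of_continuousOn
    ((hFsmooth.continuous_fderiv (by simp)).continuousOn)
  set C : ℝ := max C₀ 0 + 1 with hCdef
  have hC : 0 < C := by positivity
  have hCb : ∀ x ∈ Metric.closedBall (0 : ℝ × ℝ) R, ‖fderiv ℝ F x‖ ≤ C := fun x hx => by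
    have := hC₀ x hx
    have h2 : C₀ ≤ max C₀ 0 := le_max_left _ _
    simp only [hCdef]; linarith
  have lip : ∀ a b : ℝ × ℝ, a ∈ Metric.closedBall (0 : ℝ × ℝ) R →
      b ∈ Metric.closedBall (0 : ℝ × ℝ) R → |F a - F b| ≤ C * ‖a - b‖ := by
    intro a b ha hb
    have := Convex.norm_image_sub_le_of_norm_fderiv_le (fun x _ => hFdiff x) hCb
      (convex_closedBall _ _) hb ha
    simpa [Real.norm_eq_abs] using this
  refine ⟨2 * (L₁ * L₂) ^ 2 * C ^ 2, by positivity, ?_⟩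
  intro m n _ _ h hh hm hn φ ψ α hα
  have hm1 : (1 : ℝ) ≤ (m : ℝ) := by exact_mod_cast Nat.one_le_iff_ne_zero.mpr (NeZero.ne m)
  have hn1 : (1 : ℝ) ≤ (n : ℝ) := by exact_mod_cast Nat.one_le_iff_ne_zero.mpr (NeZero.ne n)
  have memB : ∀ z : ℝ × ℝ, |z.1| ≤ 2 * L₁ → |z.2| ≤ 2 * L₂ →
      z ∈ Metric.closedBall (0 : ℝ × ℝ) R := by
    intro z h1 h2
    rw [Metric.mem_closedBall, dist_zero_right, Prod.norm_def]
    refine max_le ?_ ?_ <;> rw [Real.norm_eq_abs] <;> [linarith; linarith]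
  -- coordinate bounds for grid points
  have hval1 : ∀ a : ZMod m, 0 ≤ ((a.val : ℝ)) ∧ ((a.val : ℝ)) ≤ (m : ℝ) - 1 := by
    intro a
    constructor
    · positivity
    · have := ZMod.val_lt a
      have : ((a.val : ℝ)) ≤ (m : ℝ) - 1 := by
        have h' : (a.val : ℝ) + 1 ≤ (m : ℝ) := by exact_mod_cast Nat.succ_le_of_lt this
        linarith
      exact this
  have hval2 : ∀ a : ZMod n, 0 ≤ ((a.val : ℝ)) ∧ ((a.val : ℝ)) ≤ (n : ℝ) - 1 := by
    intro a
    constructor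
    · positivity
    · have := ZMod.val_lt a
      have h' : (a.val : ℝ) + 1 ≤ (n : ℝ) := by exact_mod_cast Nat.succ_le_of_lt this
      linarith
  have hgmem : ∀ r : ZMod m × ZMod n, gridPt h r ∈ Metric.closedBall (0 : ℝ × ℝ) R := by
    intro r
    obtain ⟨h1a, h1b⟩ := hval1 r.1
    obtain ⟨h2a, h2b⟩ := hval2 r.2
    have p1 := mul_le_mul_of_nonneg_right h1b hh.le
    have p2 := mul_nonneg h1a hh.le
    have p3 := mul_le_mul_of_nonneg_right h2b hh.le
    have p4 := mul_nonneg h2a hh.le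
    have q1 : (0:ℝ) ≤ ((m:ℝ) - 1) * h := mul_nonneg (by linarith) hh.le
    have q2 : (0:ℝ) ≤ ((n:ℝ) - 1) * h := mul_nonneg (by linarith) hh.le
    refine memB _ (abs_le.mpr ⟨?_, ?_⟩) (abs_le.mpr ⟨?_, ?_⟩) <;>
      simp only [gridPt] <;> nlinarith [p1, p2, p3, p4, q1, q2, hh.le, hm, hn]
  have hgmem1 : ∀ r : ZMod m × ZMod n,
      ((gridPt h r).1 + h, (gridPt h r).2) ∈ Metric.closedBall (0 : ℝ × ℝ) R := by
    intro r
    obtain ⟨h1a, h1b⟩ := hval1 r.1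
    obtain ⟨h2a, h2b⟩ := hval2 r.2
    have p1 := mul_le_mul_of_nonneg_right h1b hh.le
    have p2 := mul_nonneg h1a hh.le
    have p3 := mul_le_mul_of_nonneg_right h2b hh.le
    have p4 := mul_nonneg h2a hh.le
    have q1 : (0:ℝ) ≤ ((m:ℝ) - 1) * h := mul_nonneg (by linarith) hh.le
    have q2 : (0:ℝ) ≤ ((n:ℝ) - 1) * h := mul_nonneg (by linarith) hh.le
    refine memB _ (abs_le.mpr ⟨?_, ?_⟩) (abs_le.mpr ⟨?_, ?_⟩) <;>
      simp only [gridPt] <;> nlinarith [p1, p2, p3, p4, q1, q2, hh.le, hm, hn]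
  have hgmem2 : ∀ r : ZMod m × ZMod n,
      ((gridPt h r).1, (gridPt h r).2 + h) ∈ Metric.closedBall (0 : ℝ × ℝ) R := by
    intro r
    obtain ⟨h1a, h1b⟩ := hval1 r.1
    obtain ⟨h2a, h2b⟩ := hval2 r.2
    have p1 := mul_le_mul_of_nonneg_right h1b hh.le
    have p2 := mul_nonneg h1a hh.le
    have p3 := mul_le_mul_of_nonneg_right h2b hh.le
    have p4 := mul_nonneg h2a hh.le
    have q1 : (0:ℝ) ≤ ((m:ℝ) - 1) * h := mul_nonneg (by linarith) hh.le
    have q2 : (0:ℝ) ≤ ((n:ℝ) - 1) * h := mul_nonneg (by linarith) hh.le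
    refine memB _ (abs_le.mpr ⟨?_, ?_⟩) (abs_le.mpr ⟨?_, ?_⟩) <;>
      simp only [gridPt] <;> nlinarith [p1, p2, p3, p4, q1, q2, hh.le, hm, hn]
  have fd1 : ∀ r : ZMod m × ZMod n,
      |gridRestrict m n h F (r.1 + 1, r.2) - gridRestrict m n h F r| ≤ C * h := by
    intro r
    rw [wrap1 F hFper h hm r]
    have hb := lip ((gridPt h r).1 + h, (gridPt h r).2) (gridPt h r) (hgmem1 r) (hgmem r)
    have hd : ((((gridPt h r).1 + h, (gridPt h r).2) : ℝ × ℝ) - gridPt h r) = ((h : ℝ), (0 : ℝ)) := by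
      ext <;> simp
    rw [hd] at hb
    have hnrm : ‖((h, 0) : ℝ × ℝ)‖ = h := by
      rw [Prod.norm_def]
      simp [Real.norm_eq_abs, abs_of_pos hh, max_eq_left hh.le]
    rw [hnrm] at hb
    exact hb
  have fd2 : ∀ r : ZMod m × ZMod n,
      |gridRestrict m n h F (r.1, r.2 + 1) - gridRestrict m n h F r| ≤ C * h := by
    intro r
    rw [wrap2 F hFper h hn r]
    have hb := lip ((gridPt h r).1, (gridPt h r).2 + h) (gridPt h r) (hgmem2 r) (hgmem r)
    have hd : ((((gridPt h r).1, (gridPt h r).2 + h) : ℝ × ℝ) - gridPt h r) = ((0 : ℝ), (h : ℝ)) := by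
      ext <;> simp
    rw [hd] at hb
    have hnrm : ‖((0, h) : ℝ × ℝ)‖ = h := by
      rw [Prod.norm_def]
      simp [Real.norm_eq_abs, abs_of_pos hh, max_eq_right hh.le]
    rw [hnrm] at hb
    exact hb
  have hS0 : (0:ℝ) ≤ ∑ q : ZMod m × ZMod n, (ψ q) ^ 2 :=
    Finset.sum_nonneg fun q _ => sq_nonneg _
  have hcard : ((Fintype.card (ZMod m × ZMod n) : ℕ) : ℝ) = (m : ℝ) * (n : ℝ) := by
    simp [ZMod.card]
  have hNh : (m : ℝ) * (n : ℝ) * h ^ 2 = L₁ * L₂ := by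
    rw [← hm, ← hn]; ring
  have hDle : ∀ p : ZMod m × ZMod n,
      (gconv h (gridRestrict m n h F) ψ (p.1 + 1, p.2) - gconv h (gridRestrict m n h F) ψ p) ^ 2
        ≤ h ^ 4 * (((m : ℝ) * n) * (C * h) ^ 2) * (∑ q : ZMod m × ZMod n, (ψ q) ^ 2) ∧
      (gconv h (gridRestrict m n h F) ψ (p.1, p.2 + 1) - gconv h (gridRestrict m n h F) ψ p) ^ 2
        ≤ h ^ 4 * (((m : ℝ) * n) * (C * h) ^ 2) * (∑ q : ZMod m × ZMod n, (ψ q) ^ 2) := by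
    intro p
    constructor
    · have hD : gconv h (gridRestrict m n h F) ψ (p.1 + 1, p.2)
          - gconv h (gridRestrict m n h F) ψ p
          = h ^ 2 * ∑ q : ZMod m × ZMod n,
              (gridRestrict m n h F ((p.1 - q.1) + 1, p.2 - q.2)
                - gridRestrict m n h F (p.1 - q.1, p.2 - q.2)) * ψ q := by
        rw [gconv_eq, gconv_eq, ← mul_sub, ← Finset.sum_sub_distrib]
        congr 1
        refine Finset.sum_congr rfl fun q _ => ?_
        show gridRestrict m n h F (p.1 + 1 - q.1, p.2 - q.2) * ψ q
          - gridRestrict m n h F (p.1 - q.1, p.2 - q.2) * ψ q = _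
        rw [show p.1 + 1 - q.1 = (p.1 - q.1) + 1 from by ring]
        ring
      rw [hD, mul_pow]
      have hcs := Finset.sum_mul_sq_le_sq_mul_sq Finset.univ
        (fun q : ZMod m × ZMod n => gridRestrict m n h F ((p.1 - q.1) + 1, p.2 - q.2)
          - gridRestrict m n h F (p.1 - q.1, p.2 - q.2)) ψ
      have ha : (∑ q : ZMod m × ZMod n,
          (gridRestrict m n h F ((p.1 - q.1) + 1, p.2 - q.2)
            - gridRestrict m n h F (p.1 - q.1, p.2 - q.2)) ^ 2)
          ≤ ((m : ℝ) * n) * (C * h) ^ 2 := by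
        calc (∑ q : ZMod m × ZMod n,
            (gridRestrict m n h F ((p.1 - q.1) + 1, p.2 - q.2)
              - gridRestrict m n h F (p.1 - q.1, p.2 - q.2)) ^ 2)
            ≤ ∑ _q : ZMod m × ZMod n, (C * h) ^ 2 := by
              refine Finset.sum_le_sum fun q _ => ?_
              obtain ⟨hlo, hhi⟩ := abs_le.mp (fd1 (p.1 - q.1, p.2 - q.2))
              exact sq_le_sq' (by linarith) (by linarith)
          _ = ((m : ℝ) * n) * (C * h) ^ 2 := by
              rw [Finset.sum_const, Finset.card_univ, nsmul_eq_mul, hcard]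
      calc (h ^ 2) ^ 2 * (∑ q : ZMod m × ZMod n,
            (gridRestrict m n h F ((p.1 - q.1) + 1, p.2 - q.2)
              - gridRestrict m n h F (p.1 - q.1, p.2 - q.2)) * ψ q) ^ 2
          ≤ (h ^ 2) ^ 2 * ((((m : ℝ) * n) * (C * h) ^ 2) * ∑ q : ZMod m × ZMod n, (ψ q) ^ 2) := by
            refine mul_le_mul_of_nonneg_left ?_ (by positivity)
            exact le_trans hcs (mul_le_mul_of_nonneg_right ha hS0)
        _ = h ^ 4 * (((m : ℝ) * n) * (C * h) ^ 2) * (∑ q : ZMod m × ZMod n, (ψ q) ^ 2) := by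
            ring
    · have hD : gconv h (gridRestrict m n h F) ψ (p.1, p.2 + 1)
          - gconv h (gridRestrict m n h F) ψ p
          = h ^ 2 * ∑ q : ZMod m × ZMod n,
              (gridRestrict m n h F (p.1 - q.1, (p.2 - q.2) + 1)
                - gridRestrict m n h F (p.1 - q.1, p.2 - q.2)) * ψ q := by
        rw [gconv_eq, gconv_eq, ← mul_sub, ← Finset.sum_sub_distrib]
        congr 1
        refine Finset.sum_congr rfl fun q _ => ?_
        show gridRestrict m n h F (p.1 - q.1, p.2 + 1 - q.2) * ψ q
          - gridRestrict m n h F (p.1 - q.1, p.2 - q.2) * ψ q = _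
        rw [show p.2 + 1 - q.2 = (p.2 - q.2) + 1 from by ring]
        ring
      rw [hD, mul_pow]
      have hcs := Finset.sum_mul_sq_le_sq_mul_sq Finset.univ
        (fun q : ZMod m × ZMod n => gridRestrict m n h F (p.1 - q.1, (p.2 - q.2) + 1)
          - gridRestrict m n h F (p.1 - q.1, p.2 - q.2)) ψ
      have ha : (∑ q : ZMod m × ZMod n,
          (gridRestrict m n h F (p.1 - q.1, (p.2 - q.2) + 1)
            - gridRestrict m n h F (p.1 - q.1, p.2 - q.2)) ^ 2)
          ≤ ((m : ℝ) * n) * (C * h) ^ 2 := by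
        calc (∑ q : ZMod m × ZMod n,
            (gridRestrict m n h F (p.1 - q.1, (p.2 - q.2) + 1)
              - gridRestrict m n h F (p.1 - q.1, p.2 - q.2)) ^ 2)
            ≤ ∑ _q : ZMod m × ZMod n, (C * h) ^ 2 := by
              refine Finset.sum_le_sum fun q _ => ?_
              obtain ⟨hlo, hhi⟩ := abs_le.mp (fd2 (p.1 - q.1, p.2 - q.2))
              exact sq_le_sq' (by linarith) (by linarith)
          _ = ((m : ℝ) * n) * (C * h) ^ 2 := by
              rw [Finset.sum_const, Finset.card_univ, nsmul_eq_mul, hcard]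
      calc (h ^ 2) ^ 2 * (∑ q : ZMod m × ZMod n,
            (gridRestrict m n h F (p.1 - q.1, (p.2 - q.2) + 1)
              - gridRestrict m n h F (p.1 - q.1, p.2 - q.2)) * ψ q) ^ 2
          ≤ (h ^ 2) ^ 2 * ((((m : ℝ) * n) * (C * h) ^ 2) * ∑ q : ZMod m × ZMod n, (ψ q) ^ 2) := by
            refine mul_le_mul_of_nonneg_left ?_ (by positivity)
            exact le_trans hcs (mul_le_mul_of_nonneg_right ha hS0)
        _ = h ^ 4 * (((m : ℝ) * n) * (C * h) ^ 2) * (∑ q : ZMod m × ZMod n, (ψ q) ^ 2) := by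
            ring
  -- summation by parts identity
  have hmain := lap_parts h hh.ne' (gconv h (gridRestrict m n h F) ψ) φ
  have step : -2 * h ^ 2 * gip (gconv h (gridRestrict m n h F) ψ) (glap h φ)
      = ∑ p : ZMod m × ZMod n,
          2 * ((gconv h (gridRestrict m n h F) ψ (p.1 + 1, p.2)
                - gconv h (gridRestrict m n h F) ψ p) * (φ (p.1 + 1, p.2) - φ p)
            + (gconv h (gridRestrict m n h F) ψ (p.1, p.2 + 1)
                - gconv h (gridRestrict m n h F) ψ p) * (φ (p.1, p.2 + 1) - φ p)) := by
    rw [← Finset.mul_sum]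
    linarith [hmain]
  rw [step]
  have est : ∑ p : ZMod m × ZMod n,
      2 * ((gconv h (gridRestrict m n h F) ψ (p.1 + 1, p.2)
            - gconv h (gridRestrict m n h F) ψ p) * (φ (p.1 + 1, p.2) - φ p)
        + (gconv h (gridRestrict m n h F) ψ (p.1, p.2 + 1)
            - gconv h (gridRestrict m n h F) ψ p) * (φ (p.1, p.2 + 1) - φ p))
      ≤ (∑ p : ZMod m × ZMod n,
          ((gconv h (gridRestrict m n h F) ψ (p.1 + 1, p.2)
            - gconv h (gridRestrict m n h F) ψ p) ^ 2
          + (gconv h (gridRestrict m n h F) ψ (p.1, p.2 + 1)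
            - gconv h (gridRestrict m n h F) ψ p) ^ 2)) / α
        + α * gradNormSq φ := by
    unfold gradNormSq
    rw [Finset.sum_div, Finset.mul_sum, ← Finset.sum_add_distrib]
    refine Finset.sum_le_sum fun p _ => ?_
    have y1 := young α (gconv h (gridRestrict m n h F) ψ (p.1 + 1, p.2)
        - gconv h (gridRestrict m n h F) ψ p) (φ (p.1 + 1, p.2) - φ p) hα
    have y2 := young α (gconv h (gridRestrict m n h F) ψ (p.1, p.2 + 1)
        - gconv h (gridRestrict m n h F) ψ p) (φ (p.1, p.2 + 1) - φ p) hα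
    have hadd : ((gconv h (gridRestrict m n h F) ψ (p.1 + 1, p.2)
          - gconv h (gridRestrict m n h F) ψ p) ^ 2
        + (gconv h (gridRestrict m n h F) ψ (p.1, p.2 + 1)
          - gconv h (gridRestrict m n h F) ψ p) ^ 2) / α
        = (gconv h (gridRestrict m n h F) ψ (p.1 + 1, p.2)
          - gconv h (gridRestrict m n h F) ψ p) ^ 2 / α
        + (gconv h (gridRestrict m n h F) ψ (p.1, p.2 + 1)
          - gconv h (gridRestrict m n h F) ψ p) ^ 2 / α := add_div _ _ _
    rw [hadd]
    nlinarith [y1, y2]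
  refine le_trans est ?_
  have hsum : (∑ p : ZMod m × ZMod n,
      ((gconv h (gridRestrict m n h F) ψ (p.1 + 1, p.2)
        - gconv h (gridRestrict m n h F) ψ p) ^ 2
      + (gconv h (gridRestrict m n h F) ψ (p.1, p.2 + 1)
        - gconv h (gridRestrict m n h F) ψ p) ^ 2))
      ≤ 2 * (L₁ * L₂) ^ 2 * C ^ 2 * norm2sq h ψ := by
    calc (∑ p : ZMod m × ZMod n,
        ((gconv h (gridRestrict m n h F) ψ (p.1 + 1, p.2)
          - gconv h (gridRestrict m n h F) ψ p) ^ 2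
        + (gconv h (gridRestrict m n h F) ψ (p.1, p.2 + 1)
          - gconv h (gridRestrict m n h F) ψ p) ^ 2))
        ≤ ∑ _p : ZMod m × ZMod n,
            2 * (h ^ 4 * (((m : ℝ) * n) * (C * h) ^ 2) * (∑ q : ZMod m × ZMod n, (ψ q) ^ 2)) := by
          refine Finset.sum_le_sum fun p _ => ?_
          obtain ⟨h1, h2⟩ := hDle p
          linarith
      _ = ((m : ℝ) * n) * (2 * (h ^ 4 * (((m : ℝ) * n) * (C * h) ^ 2)
            * (∑ q : ZMod m × ZMod n, (ψ q) ^ 2))) := by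
          rw [Finset.sum_const, Finset.card_univ, nsmul_eq_mul, hcard]
      _ = 2 * ((m : ℝ) * n * h ^ 2) ^ 2 * C ^ 2
            * (h ^ 2 * ∑ q : ZMod m × ZMod n, (ψ q) ^ 2) := by ring
      _ = 2 * (L₁ * L₂) ^ 2 * C ^ 2 * norm2sq h ψ := by rw [hNh]; rfl
  have hgrad : (0:ℝ) ≤ α * gradNormSq φ := by
    refine mul_nonneg hα.le ?_
    exact Finset.sum_nonneg fun p _ => by positivity
  have hdivle : (∑ p : ZMod m × ZMod n,
      ((gconv h (gridRestrict m n h F) ψ (p.1 + 1, p.2)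
        - gconv h (gridRestrict m n h F) ψ p) ^ 2
      + (gconv h (gridRestrict m n h F) ψ (p.1, p.2 + 1)
        - gconv h (gridRestrict m n h F) ψ p) ^ 2)) / α
      ≤ 2 * (L₁ * L₂) ^ 2 * C ^ 2 / α * norm2sq h ψ := by
    rw [div_mul_eq_mul_div]
    exact (div_le_div_iff_of_pos_right hα).mpr hsum
  linarith
end

section
/- Define E_c(φ) = (1/4)‖φ‖⁴_{L⁴} + ((γ_c + 2(𝖩_c∗1))/2)‖φ‖²_{L²} and E_e(φ) = ((γ_e + 𝖩_c∗1 + 𝖩_e∗1)/2)‖φ‖²_{L²} + (1/2)⟨φ, 𝖩∗φ⟩_{L²} for φ ∈ L⁴_per(Ω). Then E_c and E_e are convex functionals on L⁴_per(Ω), and E(φ) = E_c(φ) − E_e(φ) for all φ ∈ L⁴_per(Ω). -/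
open scoped BigOperators
open MeasureTheory

/-- Convex part `E_c(φ) = (1/4)‖φ‖⁴_{L⁴} + ((γ_c + 2(J_c∗1))/2)‖φ‖²_{L²}`. -/
noncomputable def cEc (L₁ L₂ γc : ℝ) (Jc φ : ℝ × ℝ → ℝ) : ℝ :=
  (1 / 4) * (∫ x in box L₁ L₂, (φ x) ^ 4)
    + ((γc + 2 * cJone L₁ L₂ Jc) / 2) * (∫ x in box L₁ L₂, (φ x) ^ 2)

/-- Concave part `E_e(φ) = ((γ_e + J_c∗1 + J_e∗1)/2)‖φ‖²_{L²} + (1/2)⟨φ, J∗φ⟩_{L²}`. -/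
noncomputable def cEe (L₁ L₂ γe : ℝ) (Jc Je J φ : ℝ × ℝ → ℝ) : ℝ :=
  ((γe + cJone L₁ L₂ Jc + cJone L₁ L₂ Je) / 2) * (∫ x in box L₁ L₂, (φ x) ^ 2)
    + (1 / 2) * (∫ x in box L₁ L₂, φ x * cconv L₁ L₂ J φ x)

namespace Stmt4Aux

open Set
open scoped ENNReal


lemma box_sub (L₁ L₂ : ℝ) : box L₁ L₂ ⊆ Icc ((0:ℝ),(0:ℝ)) (L₁,L₂) := by
  rw [← Set.Icc_prod_Icc]; exact Set.prod_mono Set.Ioo_subset_Icc_self Set.Ioo_subset_Icc_self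
lemma cont_intOn {L₁ L₂ : ℝ} {f : ℝ×ℝ→ℝ} (hf : Continuous f) : IntegrableOn f (box L₁ L₂) :=
  (hf.continuousOn.integrableOn_compact isCompact_Icc).mono_set (box_sub L₁ L₂)
lemma box_meas (L₁ L₂ : ℝ) : MeasurableSet (box L₁ L₂) := (measurableSet_Ioo.prod measurableSet_Ioo)
lemma box_fin (L₁ L₂ : ℝ) : IsFiniteMeasure (volume.restrict (box L₁ L₂)) := by
  constructor
  rw [Measure.restrict_apply_univ]
  exact lt_of_le_of_lt (measure_mono (box_sub L₁ L₂)) isCompact_Icc.measure_lt_top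
lemma per1 {L₁ L₂ : ℝ} {φ : ℝ×ℝ→ℝ} (hp : PerFun L₁ L₂ φ) (b : ℝ) :
    Function.Periodic (fun a => φ (a, b)) L₁ := fun a => (hp (a, b)).1
lemma per2 {L₁ L₂ : ℝ} {φ : ℝ×ℝ→ℝ} (hp : PerFun L₁ L₂ φ) (a : ℝ) :
    Function.Periodic (fun b => φ (a, b)) L₂ := fun b => (hp (a, b)).2

lemma per_bdd {L₁ L₂ : ℝ} (hL₁ : 0 < L₁) (hL₂ : 0 < L₂) {φ : ℝ×ℝ→ℝ}
    (hφ : Continuous φ) (hp : PerFun L₁ L₂ φ) : ∃ C, ∀ x : ℝ×ℝ, |φ x| ≤ C := by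
  obtain ⟨z, -, hC⟩ := isCompact_Icc.exists_isMaxOn (s := Icc ((0:ℝ),(0:ℝ)) (L₁,L₂))
    (Set.nonempty_Icc.2 (by constructor <;> positivity)) hφ.abs.continuousOn
  refine ⟨|φ z|, fun x => ?_⟩
  obtain ⟨a, ha, hax⟩ := (per1 hp x.2).exists_mem_Ico₀ hL₁ x.1
  obtain ⟨b, hb, hbx⟩ := (per2 hp a).exists_mem_Ico₀ hL₂ x.2
  have : φ x = φ (a, b) := by
    calc φ x = φ (x.1, x.2) := by simp
    _ = φ (a, x.2) := hax
    _ = φ (a, b) := hbx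
  rw [this]
  exact hC ⟨⟨ha.1, hb.1⟩, ⟨ha.2.le, hb.2.le⟩⟩
/-- iterated form of a box integral -/
lemma box_int_iter {L₁ L₂ : ℝ} {f : ℝ×ℝ→ℝ} (hf : Continuous f) :
    ∫ x in box L₁ L₂, f x = ∫ u in Set.Ioo 0 L₁, ∫ v in Set.Ioo 0 L₂, f (u, v) := by
  rw [show (volume : Measure (ℝ×ℝ)) = (volume.prod volume) from (MeasureTheory.Measure.volume_eq_prod ℝ ℝ)]
  exact setIntegral_prod f (by rw [← MeasureTheory.Measure.volume_eq_prod]; exact cont_intOn hf)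

lemma Ioo_int_eq {L : ℝ} (hL : 0 < L) (g : ℝ → ℝ) :
    ∫ v in Set.Ioo 0 L, g v = ∫ v in (0:ℝ)..L, g v := by
  rw [intervalIntegral.integral_of_le hL.le, integral_Ioc_eq_integral_Ioo]

/-- 1D periodic shift: ∫_0^L g (c - v) dv = ∫_0^L g v dv -/
lemma per_shift_1d {L : ℝ} (hL : 0 < L) {g : ℝ → ℝ} (hg : Function.Periodic g L) (c : ℝ) :
    ∫ v in (0:ℝ)..L, g (c - v) = ∫ v in (0:ℝ)..L, g v := by
  rw [intervalIntegral.integral_comp_sub_left g c]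
  have h2 := hg.intervalIntegral_add_eq (c - L) 0
  simp only [sub_zero, zero_add, sub_add_cancel] at h2 ⊢
  rw [h2]

/-- Periodization: the integral of a shifted-reflected periodic function over the box. -/
lemma per_shift {L₁ L₂ : ℝ} (hL₁ : 0 < L₁) (hL₂ : 0 < L₂) {f : ℝ×ℝ→ℝ}
    (hf : Continuous f) (hp : PerFun L₁ L₂ f) (c : ℝ × ℝ) :
    ∫ y in box L₁ L₂, f (c.1 - y.1, c.2 - y.2) = cJone L₁ L₂ f := by
  have hfc : Continuous fun y : ℝ×ℝ => f (c.1 - y.1, c.2 - y.2) := by fun_prop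
  have per1 : ∀ b : ℝ, Function.Periodic (fun a => f (a, b)) L₁ := fun b a => (hp (a, b)).1
  have per2 : ∀ a : ℝ, Function.Periodic (fun b => f (a, b)) L₂ := fun a b => (hp (a, b)).2
  rw [box_int_iter hfc, cJone, box_int_iter hf]
  have inner : ∀ u : ℝ, (∫ v in Set.Ioo 0 L₂, f (c.1 - u, c.2 - v))
      = ∫ v in Set.Ioo 0 L₂, f (c.1 - u, v) := by
    intro u
    rw [Ioo_int_eq hL₂, Ioo_int_eq hL₂, per_shift_1d hL₂ (per2 (c.1 - u)) c.2]
  simp only [inner]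
  -- now shift in the first variable
  set G : ℝ → ℝ := fun a => ∫ v in Set.Ioo 0 L₂, f (a, v) with hG
  have hGper : Function.Periodic G L₁ := by
    intro a
    simp only [hG]
    exact integral_congr_ae (Filter.Eventually.of_forall (fun v => per1 v a))
  rw [Ioo_int_eq hL₁ (fun u => G (c.1 - u)), Ioo_int_eq hL₁ G,
    per_shift_1d hL₁ hGper c.1]
variable {L₁ L₂ : ℝ} {J η : ℝ×ℝ→ℝ} {CJ : ℝ}

lemma conv_integrand_int (hJ : Continuous J) (hJb : ∀ z, |J z| ≤ CJ)
    (hη : Integrable η (volume.restrict (box L₁ L₂))) (x : ℝ×ℝ) :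
    Integrable (fun y => J (x.1 - y.1, x.2 - y.2) * η y) (volume.restrict (box L₁ L₂)) :=
  hη.bdd_mul ((hJ.comp (by fun_prop)).aestronglyMeasurable) (c := CJ) (Filter.Eventually.of_forall fun y => by simpa using hJb _)

lemma cconv_cont (hJ : Continuous J) (hJb : ∀ z, |J z| ≤ CJ)
    (hη : Integrable η (volume.restrict (box L₁ L₂))) : Continuous (cconv L₁ L₂ J η) := by
  apply continuous_of_dominated (bound := fun y => CJ * |η y|)
  · exact fun x => (conv_integrand_int hJ hJb hη x).1
  · intro x
    refine Filter.Eventually.of_forall fun y => ?_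
    have h1 : |J (x.1 - y.1, x.2 - y.2)| ≤ CJ := hJb _
    have h2 : (0:ℝ) ≤ |η y| := abs_nonneg _
    simp only [Real.norm_eq_abs, abs_mul]
    exact mul_le_mul_of_nonneg_right h1 h2
  · exact hη.abs.const_mul CJ
  · exact Filter.Eventually.of_forall fun y => by fun_prop

lemma cconv_bdd (hJb : ∀ z, |J z| ≤ CJ)
    (hη : Integrable η (volume.restrict (box L₁ L₂))) (x : ℝ×ℝ) :
    |cconv L₁ L₂ J η x| ≤ CJ * ∫ y in box L₁ L₂, |η y| := by
  have h : ∀ᵐ y ∂(volume.restrict (box L₁ L₂)),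
      ‖J (x.1 - y.1, x.2 - y.2) * η y‖ ≤ CJ * |η y| := by
    refine Filter.Eventually.of_forall fun y => ?_
    simp only [Real.norm_eq_abs, abs_mul]
    exact mul_le_mul_of_nonneg_right (hJb _) (abs_nonneg _)
  calc |cconv L₁ L₂ J η x| ≤ ∫ y in box L₁ L₂, CJ * |η y| := by
        simpa [cconv] using norm_integral_le_of_norm_le (hη.abs.const_mul CJ) h
    _ = CJ * ∫ y in box L₁ L₂, |η y| := integral_const_mul _ _

lemma cconv_linear (hJ : Continuous J) (hJb : ∀ z, |J z| ≤ CJ) {φ ψ : ℝ×ℝ→ℝ}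
    (hφ : Integrable φ (volume.restrict (box L₁ L₂)))
    (hψ : Integrable ψ (volume.restrict (box L₁ L₂))) (a b : ℝ) (x : ℝ×ℝ) :
    cconv L₁ L₂ J (fun y => a * φ y + b * ψ y) x
      = a * cconv L₁ L₂ J φ x + b * cconv L₁ L₂ J ψ x := by
  unfold cconv
  have h1 := conv_integrand_int hJ hJb hφ (L₁ := L₁) (L₂ := L₂) x
  have h2 := conv_integrand_int hJ hJb hψ (L₁ := L₁) (L₂ := L₂) x
  have : (fun y => J (x.1 - y.1, x.2 - y.2) * (a * φ y + b * ψ y))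
      = fun y => a * (J (x.1 - y.1, x.2 - y.2) * φ y) + b * (J (x.1 - y.1, x.2 - y.2) * ψ y) := by
    funext y; ring
  rw [this, integral_add (h1.const_mul a) (h2.const_mul b), integral_const_mul,
    integral_const_mul]
variable {α : Type*} [MeasurableSpace α] {μ : Measure α} [IsFiniteMeasure μ]

lemma int_sq {φ : α → ℝ} (hφ : MemLp φ 2 μ) : Integrable (fun x => φ x ^ 2) μ := by
  have h := hφ.integrable_norm_rpow (by norm_num) (by norm_num)
  refine h.congr (Filter.Eventually.of_forall fun x => ?_)
  show ‖φ x‖ ^ (ENNReal.toReal 2) = φ x ^ 2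
  rw [ENNReal.toReal_ofNat, show (2:ℝ) = ((2:ℕ):ℝ) by norm_num, Real.rpow_natCast,
    Real.norm_eq_abs, sq_abs]

lemma int_p4 {φ : α → ℝ} (hφ : MemLp φ 4 μ) : Integrable (fun x => φ x ^ 4) μ := by
  have h := hφ.integrable_norm_rpow (by norm_num) (by norm_num)
  refine h.congr (Filter.Eventually.of_forall fun x => ?_)
  show ‖φ x‖ ^ (ENNReal.toReal 4) = φ x ^ 4
  rw [ENNReal.toReal_ofNat, show (4:ℝ) = ((4:ℕ):ℝ) by norm_num, Real.rpow_natCast,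
    Real.norm_eq_abs, (by decide : Even 4).pow_abs]

lemma memL2_of_memL4 {φ : α → ℝ} (hφ : MemLp φ 4 μ) : MemLp φ 2 μ :=
  hφ.mono_exponent (by norm_num)

lemma int_of_memL4 {φ : α → ℝ} (hφ : MemLp φ 4 μ) : Integrable φ μ :=
  hφ.integrable (by norm_num)

lemma int_mul {φ ψ : α → ℝ} (hφ : MemLp φ 2 μ) (hψ : MemLp ψ 2 μ) :
    Integrable (fun x => φ x * ψ x) μ := by
  refine Integrable.mono' (((int_sq hφ).add (int_sq hψ)).const_mul (1/2))
    (hφ.aestronglyMeasurable.mul hψ.aestronglyMeasurable)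
    (Filter.Eventually.of_forall fun x => ?_)
  simp only [Real.norm_eq_abs, abs_mul, Pi.add_apply]
  nlinarith [sq_nonneg (φ x - ψ x), sq_nonneg (φ x + ψ x), sq_abs (φ x), sq_abs (ψ x),
    abs_nonneg (φ x), abs_nonneg (ψ x), sq_nonneg (|φ x| - |ψ x|)]


lemma ptwise_bound (a b Kz Jz : ℝ) (h1a : -Kz ≤ Jz) (h1b : Jz ≤ Kz) :
    -(1 / 2) * (a ^ 2 * Kz) - 1 / 2 * (Kz * b ^ 2) ≤ a * (Jz * b) := by
  nlinarith [mul_nonneg (by linarith : (0:ℝ) ≤ Kz + Jz) (sq_nonneg (a + b)),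
    mul_nonneg (by linarith : (0:ℝ) ≤ Kz - Jz) (sq_nonneg (a - b))]

lemma key_quad {L₁ L₂ : ℝ} (hL₁ : 0 < L₁) (hL₂ : 0 < L₂)
    {Jc Je : ℝ×ℝ→ℝ} (hJcc : Continuous Jc) (hJec : Continuous Je)
    (hJc0 : ∀ x, 0 ≤ Jc x) (hJe0 : ∀ x, 0 ≤ Je x)
    (hJcp : PerFun L₁ L₂ Jc) (hJep : PerFun L₁ L₂ Je)
    (hJce : ∀ x : ℝ×ℝ, Jc (-x.1,-x.2) = Jc x) (hJee : ∀ x : ℝ×ℝ, Je (-x.1,-x.2) = Je x)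
    {χ : ℝ×ℝ→ℝ} (hχ : MemLp χ 4 (volume.restrict (box L₁ L₂))) :
    0 ≤ (cJone L₁ L₂ Jc + cJone L₁ L₂ Je) * (∫ x in box L₁ L₂, χ x ^ 2)
      + ∫ x in box L₁ L₂, χ x * cconv L₁ L₂ (fun z => Jc z - Je z) χ x := by
  haveI := box_fin L₁ L₂
  set J : ℝ×ℝ→ℝ := fun z => Jc z - Je z with hJdef
  set K : ℝ×ℝ→ℝ := fun z => Jc z + Je z with hKdef
  have hKc : Continuous K := hJcc.add hJec
  have hJcont : Continuous J := hJcc.sub hJec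
  have hKp : PerFun L₁ L₂ K := fun x => ⟨by simp [hKdef, (hJcp x).1, (hJep x).1],
    by simp [hKdef, (hJcp x).2, (hJep x).2]⟩
  have hK0 : ∀ z, 0 ≤ K z := fun z => add_nonneg (hJc0 z) (hJe0 z)
  have hKe : ∀ x : ℝ×ℝ, K (-x.1,-x.2) = K x := fun x => by simp [hKdef, hJce x, hJee x]
  obtain ⟨CK, hCK⟩ := per_bdd hL₁ hL₂ hKc hKp
  have hJb : ∀ z, |J z| ≤ K z := fun z =>
    abs_le.2 ⟨by simp only [hJdef, hKdef]; linarith [hJc0 z, hJe0 z],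
      by simp only [hJdef, hKdef]; linarith [hJc0 z, hJe0 z]⟩
  have hKbd : ∀ z, |K z| ≤ CK := hCK
  have hJbd : ∀ z, |J z| ≤ CK := fun z => (hJb z).trans ((le_abs_self _).trans (hCK z))
  set K1 : ℝ := cJone L₁ L₂ Jc + cJone L₁ L₂ Je with hK1def
  have hK1 : cJone L₁ L₂ K = K1 := by
    rw [hK1def, cJone, cJone, cJone, ← integral_add (cont_intOn hJcc) (cont_intOn hJec)]
  have hKshift : ∀ c : ℝ×ℝ, (∫ y in box L₁ L₂, K (c.1 - y.1, c.2 - y.2)) = K1 := fun c => by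
    rw [per_shift hL₁ hL₂ hKc hKp c, hK1]
  have hχint : Integrable χ (volume.restrict (box L₁ L₂)) := int_of_memL4 hχ
  have hχ2 : Integrable (fun y => χ y ^ 2) (volume.restrict (box L₁ L₂)) :=
    int_sq (memL2_of_memL4 hχ)
  set N : ℝ := ∫ x in box L₁ L₂, χ x ^ 2 with hNdef
  -- step 1 : pointwise lower bound
  have step1 : ∀ x : ℝ×ℝ, -(1/2) * χ x ^ 2 * K1 - (1/2) * cconv L₁ L₂ K (fun y => χ y ^ 2) x
      ≤ χ x * cconv L₁ L₂ J χ x := by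
    intro x
    have hR : χ x * cconv L₁ L₂ J χ x
        = ∫ y in box L₁ L₂, χ x * (J (x.1 - y.1, x.2 - y.2) * χ y) :=
      (integral_const_mul (χ x) _).symm
    have hf₁ : Integrable (fun y => χ x ^ 2 * K (x.1 - y.1, x.2 - y.2))
        (volume.restrict (box L₁ L₂)) :=
      (cont_intOn (by fun_prop)).const_mul _
    have hf₂ : Integrable (fun y => K (x.1 - y.1, x.2 - y.2) * χ y ^ 2)
        (volume.restrict (box L₁ L₂)) := conv_integrand_int hKc hKbd hχ2 x
    have hg : Integrable (fun y => χ x * (J (x.1 - y.1, x.2 - y.2) * χ y))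
        (volume.restrict (box L₁ L₂)) := (conv_integrand_int hJcont hJbd hχint x).const_mul _
    have hLeq : -(1/2) * χ x ^ 2 * K1 - (1/2) * cconv L₁ L₂ K (fun y => χ y ^ 2) x
        = ∫ y in box L₁ L₂, (-(1/2) * (χ x ^ 2 * K (x.1 - y.1, x.2 - y.2))
            - (1/2) * (K (x.1 - y.1, x.2 - y.2) * χ y ^ 2)) := by
      rw [integral_sub (hf₁.const_mul _) (hf₂.const_mul _), integral_const_mul, integral_const_mul,
        integral_const_mul, hKshift x]
      simp only [cconv]
      ring
    rw [hR, hLeq]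
    apply integral_mono ((hf₁.const_mul _).sub (hf₂.const_mul _)) hg
    intro y
    exact ptwise_bound (χ x) (χ y) _ _ (abs_le.1 (hJb (x.1 - y.1, x.2 - y.2))).1
      (abs_le.1 (hJb (x.1 - y.1, x.2 - y.2))).2
  -- integrability of the two sides as functions of x
  have hconvKcont : Continuous (cconv L₁ L₂ K (fun y => χ y ^ 2)) := cconv_cont hKc hKbd hχ2
  have hconvKint : Integrable (cconv L₁ L₂ K (fun y => χ y ^ 2))
      (volume.restrict (box L₁ L₂)) := cont_intOn hconvKcont
  have hrhsint : Integrable (fun x => χ x * cconv L₁ L₂ J χ x)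
      (volume.restrict (box L₁ L₂)) := by
    have := hχint.bdd_mul (cconv_cont hJcont hJbd hχint).aestronglyMeasurable
      (c := CK * ∫ y in box L₁ L₂, |χ y|) (Filter.Eventually.of_forall fun x => by
        simpa using cconv_bdd hJbd hχint x)
    exact this.congr (Filter.Eventually.of_forall fun x => mul_comm _ _)
  have hlhsint : Integrable (fun x => -(1/2) * χ x ^ 2 * K1
      - (1/2) * cconv L₁ L₂ K (fun y => χ y ^ 2) x) (volume.restrict (box L₁ L₂)) := by
    have h1 : Integrable (fun x => -(1/2) * χ x ^ 2 * K1) (volume.restrict (box L₁ L₂)) := by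
      have := hχ2.const_mul (-(1/2) * K1)
      exact this.congr (Filter.Eventually.of_forall fun x => by ring)
    exact h1.sub (hconvKint.const_mul _)
  have step2 := integral_mono hlhsint hrhsint step1
  -- step 3 : Fubini
  have step3 : (∫ x in box L₁ L₂, cconv L₁ L₂ K (fun y => χ y ^ 2) x) = K1 * N := by
    have huncur : Integrable (fun z : (ℝ×ℝ)×(ℝ×ℝ) =>
        K (z.1.1 - z.2.1, z.1.2 - z.2.2) * χ z.2 ^ 2)
        ((volume.restrict (box L₁ L₂)).prod (volume.restrict (box L₁ L₂))) := by
      have base : Integrable (fun z : (ℝ×ℝ)×(ℝ×ℝ) => (1:ℝ) * χ z.2 ^ 2)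
          ((volume.restrict (box L₁ L₂)).prod (volume.restrict (box L₁ L₂))) :=
        (integrable_const (1:ℝ)).mul_prod hχ2
      have base' : Integrable (fun z : (ℝ×ℝ)×(ℝ×ℝ) => χ z.2 ^ 2)
          ((volume.restrict (box L₁ L₂)).prod (volume.restrict (box L₁ L₂))) :=
        base.congr (Filter.Eventually.of_forall fun z => by ring)
      exact base'.bdd_mul ((hKc.comp (by fun_prop)).aestronglyMeasurable)
        (c := CK) (Filter.Eventually.of_forall fun z => by simpa using hKbd _)
    have hswap := integral_integral_swap (f := fun x y : ℝ×ℝ =>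
      K (x.1 - y.1, x.2 - y.2) * χ y ^ 2) huncur
    calc (∫ x in box L₁ L₂, cconv L₁ L₂ K (fun y => χ y ^ 2) x)
        = ∫ x in box L₁ L₂, ∫ y in box L₁ L₂, K (x.1 - y.1, x.2 - y.2) * χ y ^ 2 := rfl
      _ = ∫ y in box L₁ L₂, ∫ x in box L₁ L₂, K (x.1 - y.1, x.2 - y.2) * χ y ^ 2 := hswap
      _ = ∫ y in box L₁ L₂, (∫ x in box L₁ L₂, K (x.1 - y.1, x.2 - y.2)) * χ y ^ 2 := by
          refine integral_congr_ae (Filter.Eventually.of_forall fun y => ?_)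
          exact integral_mul_const _ _
      _ = ∫ y in box L₁ L₂, K1 * χ y ^ 2 := by
          refine integral_congr_ae (Filter.Eventually.of_forall fun y => ?_)
          show (∫ x in box L₁ L₂, K (x.1 - y.1, x.2 - y.2)) * χ y ^ 2 = K1 * χ y ^ 2
          have hfe : (fun x : ℝ×ℝ => K (x.1 - y.1, x.2 - y.2))
              = fun x : ℝ×ℝ => K (y.1 - x.1, y.2 - x.2) := by
            funext x
            rw [← hKe (x.1 - y.1, x.2 - y.2)]
            norm_num
          rw [hfe, per_shift hL₁ hL₂ hKc hKp y, hK1]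
      _ = K1 * N := by rw [integral_const_mul, ← hNdef]
  -- assemble
  have hLHSval : (∫ x in box L₁ L₂, (-(1/2) * χ x ^ 2 * K1
      - (1/2) * cconv L₁ L₂ K (fun y => χ y ^ 2) x)) = -(1/2) * K1 * N - (1/2) * (K1 * N) := by
    have h1 : Integrable (fun x => -(1/2) * χ x ^ 2 * K1) (volume.restrict (box L₁ L₂)) := by
      have := hχ2.const_mul (-(1/2) * K1)
      exact this.congr (Filter.Eventually.of_forall fun x => by ring)
    rw [integral_sub h1 (hconvKint.const_mul _), integral_const_mul, step3]
    have h2 : (∫ x in box L₁ L₂, -(1/2) * χ x ^ 2 * K1)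
        = -(1/2) * K1 * N := by
      rw [show (fun x => -(1/2) * χ x ^ 2 * K1) = fun x => (-(1/2) * K1) * χ x ^ 2 from
        funext fun x => by ring, integral_const_mul, ← hNdef]
    rw [h2]
  rw [hLHSval] at step2
  clear_value J K K1 N
  linarith

lemma pow4cc (t a b : ℝ) (ht : 0 ≤ t) (ht1 : t ≤ 1) :
    (t * a + (1 - t) * b) ^ 4 ≤ t * a ^ 4 + (1 - t) * b ^ 4 := by
  have h := ((by decide : Even 4).convexOn_pow (𝕜 := ℝ)).2 (Set.mem_univ a) (Set.mem_univ b)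
    ht (show (0:ℝ) ≤ 1 - t by linarith) (by ring)
  simpa [smul_eq_mul] using h

lemma pow2cc (t a b : ℝ) (ht : 0 ≤ t) (ht1 : t ≤ 1) :
    (t * a + (1 - t) * b) ^ 2 ≤ t * a ^ 2 + (1 - t) * b ^ 2 := by
  have h := ((by decide : Even 2).convexOn_pow (𝕜 := ℝ)).2 (Set.mem_univ a) (Set.mem_univ b)
    ht (show (0:ℝ) ≤ 1 - t by linarith) (by ring)
  simpa [smul_eq_mul] using h

end Stmt4Aux

open Stmt4Aux

/-- convex splitting `E = E_c − E_e` of the continuous nonlocal energy,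
with `E_c` and `E_e` convex on `L⁴_per(Ω)`. -/
theorem stmt4 (L₁ L₂ : ℝ) (hL₁ : 0 < L₁) (hL₂ : 0 < L₂)
    (γc γe : ℝ) (hγc : 0 ≤ γc) (hγe : 0 ≤ γe)
    (Jc Je : ℝ × ℝ → ℝ) (hJcs : ContDiff ℝ (⊤ : ℕ∞) Jc) (hJes : ContDiff ℝ (⊤ : ℕ∞) Je)
    (hJc0 : ∀ x, 0 ≤ Jc x) (hJe0 : ∀ x, 0 ≤ Je x)
    (hJcp : PerFun L₁ L₂ Jc) (hJep : PerFun L₁ L₂ Je)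
    (hJce : ∀ x : ℝ × ℝ, Jc (-x.1, -x.2) = Jc x)
    (hJee : ∀ x : ℝ × ℝ, Je (-x.1, -x.2) = Je x)
    (J : ℝ × ℝ → ℝ) (hJ : J = fun x => Jc x - Je x) :
    (∀ φ ψ : ℝ × ℝ → ℝ,
        PerFun L₁ L₂ φ → MemLp φ 4 (volume.restrict (box L₁ L₂)) →
        PerFun L₁ L₂ ψ → MemLp ψ 4 (volume.restrict (box L₁ L₂)) →
        ∀ t : ℝ, 0 ≤ t → t ≤ 1 →
          cEc L₁ L₂ γc Jc (fun x => t * φ x + (1 - t) * ψ x)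
            ≤ t * cEc L₁ L₂ γc Jc φ + (1 - t) * cEc L₁ L₂ γc Jc ψ)
    ∧ (∀ φ ψ : ℝ × ℝ → ℝ,
        PerFun L₁ L₂ φ → MemLp φ 4 (volume.restrict (box L₁ L₂)) →
        PerFun L₁ L₂ ψ → MemLp ψ 4 (volume.restrict (box L₁ L₂)) →
        ∀ t : ℝ, 0 ≤ t → t ≤ 1 →
          cEe L₁ L₂ γe Jc Je J (fun x => t * φ x + (1 - t) * ψ x)
            ≤ t * cEe L₁ L₂ γe Jc Je J φ + (1 - t) * cEe L₁ L₂ γe Jc Je J ψ)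
    ∧ (∀ φ : ℝ × ℝ → ℝ, PerFun L₁ L₂ φ → MemLp φ 4 (volume.restrict (box L₁ L₂)) →
        cE L₁ L₂ γc γe J φ = cEc L₁ L₂ γc Jc φ - cEe L₁ L₂ γe Jc Je J φ) := by
  haveI := box_fin L₁ L₂
  have hJcc : Continuous Jc := hJcs.continuous
  have hJec : Continuous Je := hJes.continuous
  have hJcont : Continuous J := by rw [hJ]; exact hJcc.sub hJec
  have hJp : PerFun L₁ L₂ J := by
    rw [hJ]; intro x
    exact ⟨by simp only [(hJcp x).1, (hJep x).1], by simp only [(hJcp x).2, (hJep x).2]⟩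
  obtain ⟨CJ, hCJ⟩ := per_bdd hL₁ hL₂ hJcont hJp
  refine ⟨?_, ?_, ?_⟩
  · -- convexity of cEc
    intro φ ψ hφp hφ4 hψp hψ4 t ht ht1
    have hJc1 : 0 ≤ cJone L₁ L₂ Jc := setIntegral_nonneg (box_meas L₁ L₂) (fun x _ => hJc0 x)
    have h4 : (∫ x in box L₁ L₂, (t * φ x + (1 - t) * ψ x) ^ 4)
        ≤ t * (∫ x in box L₁ L₂, φ x ^ 4) + (1 - t) * (∫ x in box L₁ L₂, ψ x ^ 4) := by
      have hint : Integrable (fun x => t * φ x ^ 4 + (1 - t) * ψ x ^ 4)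
          (volume.restrict (box L₁ L₂)) :=
        ((int_p4 hφ4).const_mul t).add ((int_p4 hψ4).const_mul (1 - t))
      calc (∫ x in box L₁ L₂, (t * φ x + (1 - t) * ψ x) ^ 4)
          ≤ ∫ x in box L₁ L₂, (t * φ x ^ 4 + (1 - t) * ψ x ^ 4) :=
            integral_mono_of_nonneg
              (Filter.Eventually.of_forall fun x => by positivity) hint
              (Filter.Eventually.of_forall fun x => pow4cc t (φ x) (ψ x) ht ht1)
        _ = t * (∫ x in box L₁ L₂, φ x ^ 4) + (1 - t) * (∫ x in box L₁ L₂, ψ x ^ 4) := by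
            rw [integral_add ((int_p4 hφ4).const_mul t) ((int_p4 hψ4).const_mul (1 - t)),
              integral_const_mul, integral_const_mul]
    have h2 : (∫ x in box L₁ L₂, (t * φ x + (1 - t) * ψ x) ^ 2)
        ≤ t * (∫ x in box L₁ L₂, φ x ^ 2) + (1 - t) * (∫ x in box L₁ L₂, ψ x ^ 2) := by
      have hφ2 := int_sq (memL2_of_memL4 hφ4)
      have hψ2 := int_sq (memL2_of_memL4 hψ4)
      have hint : Integrable (fun x => t * φ x ^ 2 + (1 - t) * ψ x ^ 2)
          (volume.restrict (box L₁ L₂)) := (hφ2.const_mul t).add (hψ2.const_mul (1 - t))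
      calc (∫ x in box L₁ L₂, (t * φ x + (1 - t) * ψ x) ^ 2)
          ≤ ∫ x in box L₁ L₂, (t * φ x ^ 2 + (1 - t) * ψ x ^ 2) :=
            integral_mono_of_nonneg
              (Filter.Eventually.of_forall fun x => by positivity) hint
              (Filter.Eventually.of_forall fun x => pow2cc t (φ x) (ψ x) ht ht1)
        _ = t * (∫ x in box L₁ L₂, φ x ^ 2) + (1 - t) * (∫ x in box L₁ L₂, ψ x ^ 2) := by
            rw [integral_add (hφ2.const_mul t) (hψ2.const_mul (1 - t)),
              integral_const_mul, integral_const_mul]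
    have hc : (0:ℝ) ≤ (γc + 2 * cJone L₁ L₂ Jc) / 2 := by linarith
    simp only [cEc]
    have := mul_le_mul_of_nonneg_left h2 hc
    linarith
  · -- convexity of cEe
    intro φ ψ hφp hφ4 hψp hψ4 t ht ht1
    have hφi := int_of_memL4 hφ4
    have hψi := int_of_memL4 hψ4
    have hφ2m := memL2_of_memL4 hφ4
    have hψ2m := memL2_of_memL4 hψ4
    have hφ2 := int_sq hφ2m
    have hψ2 := int_sq hψ2m
    have hφψ := int_mul hφ2m hψ2m
    -- convolutions
    have hCφc : Continuous (cconv L₁ L₂ J φ) := cconv_cont hJcont hCJ hφi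
    have hCψc : Continuous (cconv L₁ L₂ J ψ) := cconv_cont hJcont hCJ hψi
    have hmk : ∀ (η ξ : ℝ×ℝ→ℝ), Integrable η (volume.restrict (box L₁ L₂)) →
        Integrable ξ (volume.restrict (box L₁ L₂)) → Continuous (cconv L₁ L₂ J ξ) →
        Integrable (fun x => η x * cconv L₁ L₂ J ξ x) (volume.restrict (box L₁ L₂)) := by
      intro η ξ hη hξ hCc
      have := hη.bdd_mul hCc.aestronglyMeasurable
        (c := CJ * ∫ y in box L₁ L₂, |ξ y|) (Filter.Eventually.of_forall fun x => by simpa using cconv_bdd hCJ hξ x)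
      exact this.congr (Filter.Eventually.of_forall fun x => mul_comm _ _)
    have hφCφ := hmk φ φ hφi hφi hCφc
    have hφCψ := hmk φ ψ hφi hψi hCψc
    have hψCφ := hmk ψ φ hψi hφi hCφc
    have hψCψ := hmk ψ ψ hψi hψi hCψc
    -- expansion of the quadratic norm term
    have hNc : (∫ x in box L₁ L₂, (t * φ x + (1 - t) * ψ x) ^ 2)
        = t^2 * (∫ x in box L₁ L₂, φ x ^ 2) + 2*t*(1-t) * (∫ x in box L₁ L₂, φ x * ψ x)
          + (1-t)^2 * (∫ x in box L₁ L₂, ψ x ^ 2) := by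
      rw [show (fun x => (t * φ x + (1 - t) * ψ x) ^ 2)
          = fun x => t^2 * φ x ^ 2 + ((2*t*(1-t)) * (φ x * ψ x) + (1-t)^2 * ψ x ^ 2) from
        funext fun x => by ring]
      have i23 : Integrable (fun x => (2*t*(1-t)) * (φ x * ψ x) + (1-t)^2 * ψ x ^ 2)
          (volume.restrict (box L₁ L₂)) := (hφψ.const_mul _).add (hψ2.const_mul _)
      rw [integral_add (hφ2.const_mul (t^2)) i23,
        integral_add (hφψ.const_mul _) (hψ2.const_mul _),
        integral_const_mul, integral_const_mul, integral_const_mul]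
      ring
    have hNχ : (∫ x in box L₁ L₂, (φ x - ψ x) ^ 2)
        = (∫ x in box L₁ L₂, φ x ^ 2) - 2 * (∫ x in box L₁ L₂, φ x * ψ x)
          + (∫ x in box L₁ L₂, ψ x ^ 2) := by
      rw [show (fun x => (φ x - ψ x) ^ 2)
          = fun x => φ x ^ 2 + ((-2) * (φ x * ψ x) + ψ x ^ 2) from funext fun x => by ring]
      have i23 : Integrable (fun x => (-2) * (φ x * ψ x) + ψ x ^ 2)
          (volume.restrict (box L₁ L₂)) := (hφψ.const_mul _).add hψ2
      rw [integral_add hφ2 i23, integral_add (hφψ.const_mul (-2)) hψ2, integral_const_mul]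
      ring
    -- expansion of the convolution quadratic form
    have hCcombo := cconv_linear (L₁ := L₁) (L₂ := L₂) hJcont hCJ hφi hψi t (1-t)
    have hQc : (∫ x in box L₁ L₂,
          (t * φ x + (1 - t) * ψ x) * cconv L₁ L₂ J (fun x => t * φ x + (1 - t) * ψ x) x)
        = t^2 * (∫ x in box L₁ L₂, φ x * cconv L₁ L₂ J φ x)
          + t*(1-t) * (∫ x in box L₁ L₂, φ x * cconv L₁ L₂ J ψ x)
          + t*(1-t) * (∫ x in box L₁ L₂, ψ x * cconv L₁ L₂ J φ x)
          + (1-t)^2 * (∫ x in box L₁ L₂, ψ x * cconv L₁ L₂ J ψ x) := by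
      have hcongr : (∫ x in box L₁ L₂,
            (t * φ x + (1 - t) * ψ x) * cconv L₁ L₂ J (fun x => t * φ x + (1 - t) * ψ x) x)
          = ∫ x in box L₁ L₂, (t^2 * (φ x * cconv L₁ L₂ J φ x)
              + ((t*(1-t)) * (φ x * cconv L₁ L₂ J ψ x)
              + ((t*(1-t)) * (ψ x * cconv L₁ L₂ J φ x)
              + ((1-t)^2 * (ψ x * cconv L₁ L₂ J ψ x))))) := by
        refine integral_congr_ae (Filter.Eventually.of_forall fun x => ?_)
        have h := hCcombo x
        simp only []
        rw [h]; ring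
      have i34 : Integrable (fun x => (t*(1-t)) * (ψ x * cconv L₁ L₂ J φ x)
          + ((1-t)^2 * (ψ x * cconv L₁ L₂ J ψ x))) (volume.restrict (box L₁ L₂)) :=
        (hψCφ.const_mul _).add (hψCψ.const_mul _)
      have i234 : Integrable (fun x => (t*(1-t)) * (φ x * cconv L₁ L₂ J ψ x)
          + ((t*(1-t)) * (ψ x * cconv L₁ L₂ J φ x)
          + ((1-t)^2 * (ψ x * cconv L₁ L₂ J ψ x)))) (volume.restrict (box L₁ L₂)) :=
        (hφCψ.const_mul _).add i34
      rw [hcongr, integral_add (hφCφ.const_mul (t^2)) i234,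
        integral_add (hφCψ.const_mul (t*(1-t))) i34,
        integral_add (hψCφ.const_mul (t*(1-t))) (hψCψ.const_mul _),
        integral_const_mul, integral_const_mul, integral_const_mul, integral_const_mul]
      ring
    -- the key inequality for χ = φ - ψ
    have hχ4 : MemLp (fun x => φ x - ψ x) 4 (volume.restrict (box L₁ L₂)) := hφ4.sub hψ4
    have key := key_quad hL₁ hL₂ hJcc hJec hJc0 hJe0 hJcp hJep hJce hJee hχ4
    rw [← hJ] at key
    have hCχ : ∀ x, cconv L₁ L₂ J (fun y => φ y - ψ y) x
        = cconv L₁ L₂ J φ x - cconv L₁ L₂ J ψ x := by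
      intro x
      have h := cconv_linear (L₁ := L₁) (L₂ := L₂) hJcont hCJ hφi hψi 1 (-1) x
      rw [show (fun y => (1:ℝ) * φ y + (-1) * ψ y) = fun y => φ y - ψ y from
        funext fun y => by ring] at h
      rw [h]; ring
    have hQχ : (∫ x in box L₁ L₂, (φ x - ψ x) * cconv L₁ L₂ J (fun y => φ y - ψ y) x)
        = (∫ x in box L₁ L₂, φ x * cconv L₁ L₂ J φ x)
          - (∫ x in box L₁ L₂, φ x * cconv L₁ L₂ J ψ x)
          - (∫ x in box L₁ L₂, ψ x * cconv L₁ L₂ J φ x)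
          + (∫ x in box L₁ L₂, ψ x * cconv L₁ L₂ J ψ x) := by
      have hcongr : (∫ x in box L₁ L₂, (φ x - ψ x) * cconv L₁ L₂ J (fun y => φ y - ψ y) x)
          = ∫ x in box L₁ L₂, (φ x * cconv L₁ L₂ J φ x
              + ((-1) * (φ x * cconv L₁ L₂ J ψ x)
              + ((-1) * (ψ x * cconv L₁ L₂ J φ x)
              + (ψ x * cconv L₁ L₂ J ψ x)))) := by
        refine integral_congr_ae (Filter.Eventually.of_forall fun x => ?_)
        simp only []
        rw [hCχ x]; ring
      have i34 : Integrable (fun x => (-1) * (ψ x * cconv L₁ L₂ J φ x)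
          + (ψ x * cconv L₁ L₂ J ψ x)) (volume.restrict (box L₁ L₂)) :=
        (hψCφ.const_mul _).add hψCψ
      have i234 : Integrable (fun x => (-1) * (φ x * cconv L₁ L₂ J ψ x)
          + ((-1) * (ψ x * cconv L₁ L₂ J φ x) + (ψ x * cconv L₁ L₂ J ψ x)))
          (volume.restrict (box L₁ L₂)) := (hφCψ.const_mul _).add i34
      rw [hcongr, integral_add hφCφ i234, integral_add (hφCψ.const_mul (-1)) i34,
        integral_add (hψCφ.const_mul (-1)) hψCψ, integral_const_mul, integral_const_mul]
      ring
    have hNχnn : (0:ℝ) ≤ (∫ x in box L₁ L₂, φ x ^ 2) - 2 * (∫ x in box L₁ L₂, φ x * ψ x)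
        + (∫ x in box L₁ L₂, ψ x ^ 2) := by
      rw [← hNχ]
      exact integral_nonneg fun x => sq_nonneg _
    rw [hNχ, hQχ] at key
    have hts : 0 ≤ t * (1 - t) := mul_nonneg ht (by linarith)
    have h1 : 0 ≤ t*(1-t) * (γe * ((∫ x in box L₁ L₂, φ x ^ 2)
        - 2 * (∫ x in box L₁ L₂, φ x * ψ x) + (∫ x in box L₁ L₂, ψ x ^ 2))) :=
      mul_nonneg hts (mul_nonneg hγe hNχnn)
    have h2 := mul_nonneg hts key
    simp only [cEe]
    rw [hNc, hQc]
    nlinarith [h1, h2]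
  · -- splitting
    intro φ hφp hφ4
    have hJ1 : cJone L₁ L₂ J = cJone L₁ L₂ Jc - cJone L₁ L₂ Je := by
      rw [hJ, cJone, cJone, cJone]
      exact integral_sub (cont_intOn hJcc) (cont_intOn hJec)
    simp only [cE, cEc, cEe, hJ1]
    ring
end

section
/- For any time step s > 0 and any periodic grid functions φ^{k−1}, φ^k, there exists a unique periodic grid function φ^{k+1} satisfying the second-order convex-splitting nCH scheme φ^{k+1} − φ^k = s Δ_h w^{k+1/2}. Moreover, any such solution is discretely mass conservative: ⟨φ^{k+1} − φ^k, 1⟩ = 0. -/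
open scoped BigOperators
open MeasureTheory

/-!
Mass conservation holds because `Σ_p (Δ_h g)_p = 0` for every `g`. The chemical potential is
`f_p(φ^{k+1}_p)` with `f_p b = η(φᵏ_p, b) + (B_c/2) b + K_p`, where `K` collects the explicit
terms; each `f_p` is strictly increasing since `B_c ≥ 0`. Uniqueness: if `ψ₁, ψ₂` solve the scheme
and `d = f(ψ₁) - f(ψ₂)`, then `⟨ψ₁ - ψ₂, d⟩ = s ⟨Δ_h d, d⟩ = -(s / h²) ‖∇_h d‖² ≤ 0`, while
monotonicity makes every summand nonnegative, and positive where `ψ₁ ≠ ψ₂`.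
Existence is variational: with `ψ = φ + s Δ_h w` and `F_p' = f_p`, the scheme is the
Euler–Lagrange equation in `w` of `Σ_p F_p(ψ_p) - (s/2) ⟨Δ_h w, w⟩ + (Σ_p w_p)²`, whose last term
forces `Σ_p w_p = 0`. Since the quartic `F_p` are bounded below and `‖∇_h w‖² + (Σ_p w_p)²` is a
positive definite quadratic form, the functional is coercive and attains its minimum.
-/

open Finset

section ShiftSums

variable {G : Type*} [AddCommGroup G] [Fintype G]

lemma sum_comp_add_mul (e : G) (φ ψ : G → ℝ) :
    ∑ p, φ (p + e) * ψ p = ∑ p, φ p * ψ (p - e) := by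
  simpa using (Equiv.sum_comp (Equiv.subRight e) fun p => φ (p + e) * ψ p).symm

lemma sum_comp_sub_mul (e : G) (φ ψ : G → ℝ) :
    ∑ p, φ (p - e) * ψ p = ∑ p, φ p * ψ (p + e) := by
  simpa [sub_eq_add_neg] using sum_comp_add_mul (-e) φ ψ

lemma sum_neighbor_mul (e : G) (φ ψ : G → ℝ) :
    ∑ p, (φ (p + e) + φ (p - e)) * ψ p = ∑ p, φ p * (ψ (p + e) + ψ (p - e)) := by
  simp only [add_mul, mul_add, sum_add_distrib, sum_comp_add_mul, sum_comp_sub_mul]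
  exact add_comm _ _

lemma sum_neighbor_mul_self (e : G) (φ : G → ℝ) :
    ∑ p, (φ (p + e) + φ (p - e)) * φ p = ∑ p, (2 * φ p ^ 2 - (φ (p + e) - φ p) ^ 2) := by
  have hsq : ∑ p, φ (p + e) ^ 2 = ∑ p, φ p ^ 2 := Equiv.sum_comp (Equiv.addRight e) (φ · ^ 2)
  calc ∑ p, (φ (p + e) + φ (p - e)) * φ p
      = 2 * ∑ p, φ (p + e) * φ p + (∑ p, φ p ^ 2 - ∑ p, φ (p + e) ^ 2) := by
        simp only [add_mul, sum_add_distrib, sum_comp_sub_mul, hsq, mul_comm (φ _) (φ (_ + e))]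
        ring
    _ = ∑ p, (2 * φ p ^ 2 - (φ (p + e) - φ p) ^ 2) := by
        simp only [mul_sum, ← sum_sub_distrib, ← sum_add_distrib]
        exact sum_congr rfl fun p _ => by ring

end ShiftSums

section GridLaplacian

variable {m n : ℕ}

lemma add_mk_one_zero (p : ZMod m × ZMod n) : p + (1, 0) = (p.1 + 1, p.2) :=
  Prod.ext rfl (add_zero _)

lemma sub_mk_one_zero (p : ZMod m × ZMod n) : p - (1, 0) = (p.1 - 1, p.2) :=
  Prod.ext rfl (sub_zero _)

lemma add_mk_zero_one (p : ZMod m × ZMod n) : p + (0, 1) = (p.1, p.2 + 1) :=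
  Prod.ext (add_zero _) rfl

lemma sub_mk_zero_one (p : ZMod m × ZMod n) : p - (0, 1) = (p.1, p.2 - 1) :=
  Prod.ext (sub_zero _) rfl

lemma glap_apply (h : ℝ) (φ : ZMod m × ZMod n → ℝ) (p : ZMod m × ZMod n) :
    glap h φ p = (φ (p + (1, 0)) + φ (p - (1, 0)) + (φ (p + (0, 1)) + φ (p - (0, 1)))
      - 4 * φ p) / h ^ 2 := by
  rw [add_mk_one_zero, sub_mk_one_zero, add_mk_zero_one, sub_mk_zero_one, glap,
    add_assoc _ (φ (p.1, p.2 + 1))]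

lemma glap_const (h c : ℝ) (p : ZMod m × ZMod n) : glap h (fun _ => c) p = 0 := by
  simp only [glap]; ring

lemma glap_sub (h : ℝ) (φ ψ : ZMod m × ZMod n → ℝ) : glap h (φ - ψ) = glap h φ - glap h ψ := by
  funext p; simp only [glap, Pi.sub_apply]; ring

lemma glap_add_smul (h t : ℝ) (φ ψ : ZMod m × ZMod n → ℝ) (p : ZMod m × ZMod n) :
    glap h (φ + t • ψ) p = glap h φ p + t * glap h ψ p := by
  simp only [glap, Pi.add_apply, Pi.smul_apply, smul_eq_mul]; ring

variable [NeZero m] [NeZero n]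

lemma sum_glap_mul (h : ℝ) (φ ψ : ZMod m × ZMod n → ℝ) :
    ∑ p, glap h φ p * ψ p = (∑ p, (φ (p + (1, 0)) + φ (p - (1, 0))) * ψ p
      + ∑ p, (φ (p + (0, 1)) + φ (p - (0, 1))) * ψ p - 4 * ∑ p, φ p * ψ p) / h ^ 2 := by
  simp only [mul_sum, ← sum_add_distrib, ← sum_sub_distrib, sum_div]
  exact sum_congr rfl fun p _ => by rw [glap_apply]; ring

lemma sum_glap_mul_eq_sum_mul_glap (h : ℝ) (φ ψ : ZMod m × ZMod n → ℝ) :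
    ∑ p, glap h φ p * ψ p = ∑ p, φ p * glap h ψ p := by
  rw [sum_glap_mul, sum_neighbor_mul, sum_neighbor_mul]
  simp only [mul_sum, ← sum_add_distrib, ← sum_sub_distrib, sum_div]
  exact sum_congr rfl fun p _ => by rw [glap_apply]; ring

lemma sum_glap_mul_self (h : ℝ) (φ : ZMod m × ZMod n → ℝ) :
    ∑ p, glap h φ p * φ p = -gradNormSq φ / h ^ 2 := by
  rw [sum_glap_mul, sum_neighbor_mul_self, sum_neighbor_mul_self, gradNormSq]
  simp only [← add_mk_one_zero, ← add_mk_zero_one, mul_sum, ← sum_add_distrib, ← sum_sub_distrib,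
    ← sum_neg_distrib, sum_div]
  exact sum_congr rfl fun p _ => by ring

lemma sum_glap (h : ℝ) (φ : ZMod m × ZMod n → ℝ) : ∑ p, glap h φ p = 0 := by
  simpa [glap_const] using sum_glap_mul_eq_sum_mul_glap h φ fun _ => 1

lemma gip_smul_glap_one (h s : ℝ) (φ : ZMod m × ZMod n → ℝ) :
    gip (s • glap h φ) (fun _ => 1) = 0 := by
  simp [gip, ← mul_sum, sum_glap]

end GridLaplacian

lemma exists_pos_mul_norm_sq_le_of_homogeneous {E : Type*} [NormedAddCommGroup E]
    [NormedSpace ℝ E] [FiniteDimensional ℝ E] [Nontrivial E] {Q : E → ℝ} (hQc : Continuous Q)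
    (hQ : ∀ (c : ℝ) x, Q (c • x) = c ^ 2 * Q x) (hQpos : ∀ x, x ≠ 0 → 0 < Q x) :
    ∃ μ > 0, ∀ x, μ * ‖x‖ ^ 2 ≤ Q x := by
  obtain ⟨x₀, hx₀, hmin⟩ := (isCompact_sphere (0 : E) 1).exists_isMinOn
    (NormedSpace.sphere_nonempty.mpr zero_le_one) hQc.continuousOn
  have hx₀ : ‖x₀‖ = 1 := by simpa using hx₀
  refine ⟨Q x₀, hQpos x₀ (norm_ne_zero_iff.mp (by simp [hx₀])), fun x => ?_⟩
  rcases eq_or_ne x 0 with rfl | hx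
  · simpa using (hQ 0 0).ge
  · have hxn : ‖x‖ ≠ 0 := norm_ne_zero_iff.mpr hx
    have hunit : ‖x‖⁻¹ • x ∈ Metric.sphere (0 : E) 1 := by
      simp [norm_smul, hxn]
    calc Q x₀ * ‖x‖ ^ 2 ≤ Q (‖x‖⁻¹ • x) * ‖x‖ ^ 2 := by gcongr; exact hmin hunit
      _ = Q x := by rw [hQ]; field_simp

section GridPoincare

variable {m n : ℕ} [NeZero m] [NeZero n]

lemma gradNormSq_nonneg (φ : ZMod m × ZMod n → ℝ) : 0 ≤ gradNormSq φ :=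
  sum_nonneg fun _ _ => by positivity

lemma eq_const_of_gradNormSq_eq_zero {φ : ZMod m × ZMod n → ℝ} (hφ : gradNormSq φ = 0)
    (p : ZMod m × ZMod n) : φ p = φ 0 := by
  have hstep : ∀ q : ZMod m × ZMod n, φ (q.1 + 1, q.2) = φ q ∧ φ (q.1, q.2 + 1) = φ q := fun q => by
    obtain ⟨h₁, h₂⟩ := (add_eq_zero_iff_of_nonneg (sq_nonneg _) (sq_nonneg _)).mp
      ((sum_eq_zero_iff_of_nonneg fun q _ => by positivity).mp hφ q (mem_univ q))
    exact ⟨sub_eq_zero.mp (pow_eq_zero_iff two_ne_zero |>.mp h₁),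
      sub_eq_zero.mp (pow_eq_zero_iff two_ne_zero |>.mp h₂)⟩
  have hper₁ : Function.Periodic φ (1, 0) := fun q => by rw [add_mk_one_zero]; exact (hstep q).1
  have hper₂ : Function.Periodic φ (0, 1) := fun q => by rw [add_mk_zero_one]; exact (hstep q).2
  calc φ p = φ (0 + p.1.val • (1, 0) + p.2.val • (0, 1)) := by congr 1; ext <;> simp
    _ = φ 0 := by rw [hper₂.nsmul, hper₁.nsmul]

lemma exists_pos_mul_norm_sq_le_gradNormSq_add_sq_sum :
    ∃ μ > 0, ∀ φ : ZMod m × ZMod n → ℝ, μ * ‖φ‖ ^ 2 ≤ gradNormSq φ + (∑ p, φ p) ^ 2 := by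
  refine exists_pos_mul_norm_sq_le_of_homogeneous (by unfold gradNormSq; fun_prop)
    (fun c φ => ?_) (fun φ hφ => ?_)
  · simp only [gradNormSq, Pi.smul_apply, smul_eq_mul, ← mul_sub, mul_pow, ← mul_add, ← mul_sum]
  · by_contra hle
    obtain ⟨hG, hS⟩ := (add_eq_zero_iff_of_nonneg (gradNormSq_nonneg φ) (sq_nonneg _)).mp
      (le_antisymm (not_lt.mp hle) (add_nonneg (gradNormSq_nonneg φ) (sq_nonneg _)))
    rw [sq_eq_zero_iff] at hS
    have hconst := eq_const_of_gradNormSq_eq_zero hG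
    rw [sum_congr rfl fun p _ => hconst p, sum_const, nsmul_eq_mul, mul_eq_zero] at hS
    refine hφ (funext fun p => ?_)
    rw [hconst p, hS.resolve_left (by simp [NeZero.ne])]
    rfl

end GridPoincare

lemma StrictMono.sub_mul_sub_pos {g : ℝ → ℝ} (hg : StrictMono g) {x y : ℝ} (hxy : x ≠ y) :
    0 < (x - y) * (g x - g y) := by
  rcases hxy.lt_or_gt with hlt | hlt
  · exact mul_pos_of_neg_of_neg (sub_neg.mpr hlt) (sub_neg.mpr (hg hlt))
  · exact mul_pos (sub_pos.mpr hlt) (sub_pos.mpr (hg hlt))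

lemma StrictMono.sub_mul_sub_nonneg {g : ℝ → ℝ} (hg : StrictMono g) (x y : ℝ) :
    0 ≤ (x - y) * (g x - g y) := by
  rcases eq_or_ne x y with rfl | hxy
  · simp
  · exact (hg.sub_mul_sub_pos hxy).le

section Scheme

variable {m n : ℕ} [NeZero m] [NeZero n] {h s : ℝ} {F f : ZMod m × ZMod n → ℝ → ℝ}

theorem eq_of_sub_eq_smul_glap (hs : 0 ≤ s) (hf : ∀ p, StrictMono (f p))
    {φ ψ₁ ψ₂ : ZMod m × ZMod n → ℝ}
    (h₁ : ψ₁ - φ = s • glap h (fun p => f p (ψ₁ p)))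
    (h₂ : ψ₂ - φ = s • glap h (fun p => f p (ψ₂ p))) : ψ₁ = ψ₂ := by
  set d : ZMod m × ZMod n → ℝ := fun p => f p (ψ₁ p) - f p (ψ₂ p)
  have hdiff : ψ₁ - ψ₂ = s • glap h d := by
    rw [show d = (fun p => f p (ψ₁ p)) - fun p => f p (ψ₂ p) from rfl, glap_sub, smul_sub,
      ← h₁, ← h₂]
    abel
  have hnonpos : ∑ p, (ψ₁ p - ψ₂ p) * d p ≤ 0 :=
    calc ∑ p, (ψ₁ p - ψ₂ p) * d p = s * ∑ p, glap h d p * d p := by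
          rw [mul_sum]
          exact sum_congr rfl fun p _ => by rw [← Pi.sub_apply ψ₁, hdiff]; simp [mul_assoc]
      _ = -(s * gradNormSq d / h ^ 2) := by rw [sum_glap_mul_self]; ring
      _ ≤ 0 := neg_nonpos.mpr (by have := gradNormSq_nonneg d; positivity)
  by_contra hne
  obtain ⟨p, hp⟩ := Function.ne_iff.mp hne
  exact hnonpos.not_gt (sum_pos' (fun q _ => (hf q).sub_mul_sub_nonneg _ _)
    ⟨p, mem_univ p, (hf p).sub_mul_sub_pos hp⟩)

noncomputable def schemeFunctional (h s : ℝ) (F : ZMod m × ZMod n → ℝ → ℝ)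
    (φ w : ZMod m × ZMod n → ℝ) : ℝ :=
  ∑ p, F p (φ p + s * glap h w p) - s / 2 * ∑ p, glap h w p * w p + (∑ p, w p) ^ 2

lemma continuous_schemeFunctional (hF : ∀ p, Continuous (F p)) (φ : ZMod m × ZMod n → ℝ) :
    Continuous (schemeFunctional h s F φ) := by
  unfold schemeFunctional glap
  fun_prop

lemma tendsto_schemeFunctional_cocompact (hh : h ≠ 0) (hs : 0 < s)
    (hbdd : ∀ p, BddBelow (Set.range (F p))) (φ : ZMod m × ZMod n → ℝ) :
    Filter.Tendsto (schemeFunctional h s F φ) (Filter.cocompact _) Filter.atTop := by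
  choose C hC using hbdd
  obtain ⟨μ, hμ, hμle⟩ := exists_pos_mul_norm_sq_le_gradNormSq_add_sq_sum (m := m) (n := n)
  obtain ⟨c, hc, hcG, hcS⟩ : ∃ c > 0, c ≤ s / (2 * h ^ 2) ∧ c ≤ 1 :=
    ⟨_, lt_min (by positivity) one_pos, min_le_left _ _, min_le_right _ _⟩
  have hbound : ∀ w, ∑ p, C p + c * μ * ‖w‖ ^ 2 ≤ schemeFunctional h s F φ w := fun w => by
    have hpot : ∑ p, C p ≤ ∑ p, F p (φ p + s * glap h w p) := sum_le_sum fun p _ => hC p ⟨_, rfl⟩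
    have hdir : -(s / 2 * ∑ p, glap h w p * w p) = s / (2 * h ^ 2) * gradNormSq w := by
      rw [sum_glap_mul_self]; field_simp
    have hG := mul_le_mul_of_nonneg_right hcG (gradNormSq_nonneg w)
    have hS := mul_le_mul_of_nonneg_right hcS (sq_nonneg (∑ p, w p))
    have hP := mul_le_mul_of_nonneg_left (hμle w) hc.le
    unfold schemeFunctional
    linarith
  refine Filter.tendsto_atTop_mono hbound (Filter.tendsto_atTop_add_const_left _ _ ?_)
  exact ((Filter.tendsto_pow_atTop two_ne_zero).const_mul_atTop (by positivity)).comp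
    tendsto_norm_cocompact_atTop

lemma hasDerivAt_schemeFunctional_line (hF : ∀ p x, HasDerivAt (F p) (f p x) x)
    (φ w u : ZMod m × ZMod n → ℝ) :
    HasDerivAt (fun t : ℝ => schemeFunctional h s F φ (w + t • u))
      (s * ∑ p, (glap h (fun q => f q (φ q + s * glap h w q)) p - glap h w p) * u p
        + 2 * (∑ p, w p) * ∑ p, u p) 0 := by
  have hlap : ∀ p, HasDerivAt (fun t : ℝ => glap h (w + t • u) p) (glap h u p) 0 := fun p => by
    simp only [glap_add_smul]
    simpa using ((hasDerivAt_id (0 : ℝ)).mul_const (glap h u p)).const_add (glap h w p)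
  have hval : ∀ p, HasDerivAt (fun t : ℝ => (w + t • u) p) (u p) 0 := fun p => by
    simp only [Pi.add_apply, Pi.smul_apply, smul_eq_mul]
    simpa using ((hasDerivAt_id (0 : ℝ)).mul_const (u p)).const_add (w p)
  have hpot : HasDerivAt (fun t : ℝ => ∑ p, F p (φ p + s * glap h (w + t • u) p))
      (∑ p, f p (φ p + s * glap h w p) * (s * glap h u p)) 0 :=
    HasDerivAt.fun_sum fun p _ => by
      simpa [Function.comp_def] using (hF p _).comp 0 (((hlap p).const_mul s).const_add (φ p))
  have hquad : HasDerivAt (fun t : ℝ => ∑ p, glap h (w + t • u) p * (w + t • u) p)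
      (∑ p, (glap h u p * w p + glap h w p * u p)) 0 :=
    HasDerivAt.fun_sum fun p _ => by simpa using (hlap p).fun_mul (hval p)
  have hmass : HasDerivAt (fun t : ℝ => (∑ p, (w + t • u) p) ^ 2)
      (2 * (∑ p, w p) * ∑ p, u p) 0 := by
    simpa using (HasDerivAt.fun_sum fun p _ => hval p).fun_pow 2
  refine ((hpot.sub (hquad.const_mul (s / 2))).add hmass).congr_deriv ?_
  have hpair : ∑ p, glap h u p * w p = ∑ p, glap h w p * u p := by
    rw [sum_glap_mul_eq_sum_mul_glap]; exact sum_congr rfl fun p _ => mul_comm _ _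
  have hmove : ∑ p, f p (φ p + s * glap h w p) * (s * glap h u p)
      = s * ∑ p, glap h (fun q => f q (φ q + s * glap h w q)) p * u p := by
    rw [sum_glap_mul_eq_sum_mul_glap, mul_sum]; exact sum_congr rfl fun p _ => by ring
  rw [sum_add_distrib, hpair, hmove]
  simp only [sub_mul, sum_sub_distrib]
  ring

theorem exists_sub_eq_smul_glap (hh : h ≠ 0) (hs : 0 < s) (hF : ∀ p x, HasDerivAt (F p) (f p x) x)
    (hbdd : ∀ p, BddBelow (Set.range (F p))) (φ : ZMod m × ZMod n → ℝ) :
    ∃ ψ, ψ - φ = s • glap h (fun p => f p (ψ p)) := by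
  have hFc : ∀ p, Continuous (F p) := fun p =>
    continuous_iff_continuousAt.mpr fun x => (hF p x).continuousAt
  obtain ⟨w, hw⟩ := (continuous_schemeFunctional hFc φ).exists_forall_le
    (tendsto_schemeFunctional_cocompact hh hs hbdd φ)
  set ψ := fun q => φ q + s * glap h w q
  have hcrit : ∀ u : ZMod m × ZMod n → ℝ,
      s * ∑ p, (glap h (fun q => f q (ψ q)) p - glap h w p) * u p
        + 2 * (∑ p, w p) * ∑ p, u p = 0 := fun u =>
    IsLocalMin.hasDerivAt_eq_zero
      (Filter.Eventually.of_forall fun t => by simpa using hw (w + t • u))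
      (hasDerivAt_schemeFunctional_line hF φ w u)
  have hmean : ∑ p, w p = 0 := by simpa [sum_sub_distrib, sum_glap, NeZero.ne] using hcrit 1
  have hres : glap h (fun q => f q (ψ q)) = glap h w := by
    have := hcrit (glap h (fun q => f q (ψ q)) - glap h w)
    rw [hmean, mul_zero, zero_mul, add_zero, mul_eq_zero, or_iff_right hs.ne'] at this
    funext p
    exact sub_eq_zero.mp ((sum_mul_self_eq_zero_iff _ _).mp this p (mem_univ p))
  refine ⟨ψ, ?_⟩
  rw [hres]
  funext p
  simp [ψ]

end Scheme

noncomputable def eta (a b : ℝ) : ℝ := 1 / 4 * (a ^ 2 + b ^ 2) * (a + b)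

noncomputable def etaPrimitive (a b : ℝ) : ℝ :=
  a ^ 3 * b / 4 + a ^ 2 * b ^ 2 / 8 + a * b ^ 3 / 12 + b ^ 4 / 16

lemma strictMono_eta (a : ℝ) : StrictMono (eta a) := fun x y hxy => by
  unfold eta
  nlinarith [sq_nonneg (2 * a + x + y), sq_nonneg (x + y),
    mul_pos (sub_pos.mpr hxy) (sub_pos.mpr hxy)]

lemma hasDerivAt_etaPrimitive_add (a c k x : ℝ) :
    HasDerivAt (fun b => etaPrimitive a b + c / 2 * b ^ 2 + k * b) (eta a x + c * x + k) x := by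
  have h₁ := hasDerivAt_id x
  have h₂ := hasDerivAt_pow 2 x
  have h₃ := hasDerivAt_pow 3 x
  have h₄ := hasDerivAt_pow 4 x
  have hsum := (((h₁.const_mul (a ^ 3 / 4 + k)).add (h₂.const_mul (a ^ 2 / 8 + c / 2))).add
    (h₃.const_mul (a / 12))).add (h₄.const_mul (1 / 16))
  refine (hsum.congr_of_eventuallyEq (.of_forall fun b => ?_)).congr_deriv ?_
  · simp only [etaPrimitive, id, Pi.add_apply]; ring
  · simp only [eta]; norm_num; ring

lemma bddBelow_range_etaPrimitive_add (a c k : ℝ) :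
    BddBelow (Set.range fun b => etaPrimitive a b + c / 2 * b ^ 2 + k * b) := by
  refine ⟨-(a ^ 4 + 8 * (c ^ 2 + k ^ 2 + 1)), ?_⟩
  rintro _ ⟨b, rfl⟩
  have hquartic : b ^ 4 / 32 - a ^ 4 ≤ etaPrimitive a b := by
    unfold etaPrimitive
    nlinarith [sq_nonneg (b ^ 2 + 2 * a * b), sq_nonneg (a * b + 2 * a ^ 2),
      sq_nonneg (a * b + a ^ 2), sq_nonneg (b ^ 2 + a * b)]
  nlinarith [sq_nonneg (b + k), sq_nonneg (b ^ 2 / 8 + 2 * c), sq_nonneg (b ^ 2 - 8)]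

theorem stmt6_general (m n : ℕ) [NeZero m] [NeZero n] (h s : ℝ) (hh : 0 < h) (hs : 0 < s)
    (Jc : ZMod m × ZMod n → ℝ) (hJc0 : ∀ p, 0 ≤ Jc p)
    (γc : ℝ) (hγc : 0 ≤ γc)
    (J : ZMod m × ZMod n → ℝ)
    (Bc Be : ℝ) (hBc : Bc = gconvOne h Jc + γc)
    (φold φ : ZMod m × ZMod n → ℝ) :
    (∃! φnew : ZMod m × ZMod n → ℝ,
        φnew - φ = s • glap h (chemPot h Bc Be J φold φ φnew))
    ∧ (∀ φnew : ZMod m × ZMod n → ℝ,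
        φnew - φ = s • glap h (chemPot h Bc Be J φold φ φnew) →
        gip (φnew - φ) (fun _ => (1 : ℝ)) = 0) := by
  have hBc0 : 0 ≤ Bc :=
    hBc ▸ add_nonneg (mul_nonneg (sq_nonneg h) (sum_nonneg fun q _ => hJc0 q)) hγc
  set K : ZMod m × ZMod n → ℝ := fun p => Bc / 2 * φ p - Be * (3 / 2 * φ p - 1 / 2 * φold p)
    - gconv h J (fun q => 3 / 2 * φ q - 1 / 2 * φold q) p
  set f : ZMod m × ZMod n → ℝ → ℝ := fun p b => eta (φ p) b + Bc / 2 * b + K p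
  have hchem : ∀ ψ, chemPot h Bc Be J φold φ ψ = fun p => f p (ψ p) :=
    fun ψ => funext fun p => by simp only [chemPot, etaNL, eta, f, K]; ring
  have hf : ∀ p, StrictMono (f p) := fun p =>
    ((strictMono_eta (φ p)).add_monotone fun _ _ hxy =>
      mul_le_mul_of_nonneg_left hxy (div_nonneg hBc0 zero_le_two)).add_const (K p)
  simp only [hchem]
  obtain ⟨ψ, hψ⟩ := exists_sub_eq_smul_glap hh.ne' hs
    (fun p => hasDerivAt_etaPrimitive_add (φ p) (Bc / 2) (K p))
    (fun p => bddBelow_range_etaPrimitive_add _ _ _) φ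
  exact ⟨⟨ψ, hψ, fun ψ' hψ' => eq_of_sub_eq_smul_glap hs.le hf hψ' hψ⟩,
    fun ψ' hψ' => by rw [hψ', gip_smul_glap_one]⟩

/-- unconditional unique solvability and discrete mass conservation
of the second-order convex-splitting nCH scheme `φ^{k+1} − φ^k = s Δ_h w^{k+1/2}`. -/
theorem stmt6 (m n : ℕ) [NeZero m] [NeZero n] (h s : ℝ) (hh : 0 < h) (hs : 0 < s)
    (Jc Je : ZMod m × ZMod n → ℝ) (hJc0 : ∀ p, 0 ≤ Jc p) (hJe0 : ∀ p, 0 ≤ Je p)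
    (hJce : EvenKer Jc) (hJee : EvenKer Je)
    (γc γe : ℝ) (hγc : 0 ≤ γc) (hγe : 0 ≤ γe)
    (J : ZMod m × ZMod n → ℝ) (hJ : J = Jc - Je)
    (Bc Be : ℝ) (hBc : Bc = gconvOne h Jc + γc) (hBe : Be = gconvOne h Je + γe)
    (φold φ : ZMod m × ZMod n → ℝ) :
    (∃! φnew : ZMod m × ZMod n → ℝ,
        φnew - φ = s • glap h (chemPot h Bc Be J φold φ φnew))
    ∧ (∀ φnew : ZMod m × ZMod n → ℝ,
        φnew - φ = s • glap h (chemPot h Bc Be J φold φ φnew) →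
        gip (φnew - φ) (fun _ => (1 : ℝ)) = 0) :=
  stmt6_general m n h s hh hs Jc hJc0 γc hγc J Bc Be hBc φold φ
end

section
/- For every periodic grid function φ: (1/8)‖φ‖₄⁴ ≤ F(φ) + ((γ_c − γ_e − 2[J_e⋆1])²/2)|Ω| and (1/2)‖φ‖₂² ≤ F(φ) + ((γ_c − γ_e − 2[J_e⋆1] − 1)²/4)|Ω|, where |Ω| = m·n·h². In particular there is a nonnegative constant C with F(φ) + C ≥ 0 for all periodic grid functions φ. -/
open scoped BigOperators
open MeasureTheory

private lemma shift_sum_sq {m n : ℕ} [NeZero m] [NeZero n] (φ : ZMod m × ZMod n → ℝ)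
    (q : ZMod m × ZMod n) :
    ∑ p : ZMod m × ZMod n, φ (p.1 - q.1, p.2 - q.2) ^ 2 = ∑ p : ZMod m × ZMod n, φ p ^ 2 :=
  Fintype.sum_equiv (Equiv.subRight q) _ _ (fun _ => rfl)

private lemma gip_conv_abs_bound {m n : ℕ} [NeZero m] [NeZero n] (h : ℝ) (hh : 0 ≤ h)
    (f φ : ZMod m × ZMod n → ℝ) (hf : ∀ p, 0 ≤ f p) :
    |h ^ 2 * gip φ (gconv h f φ)| ≤ gconvOne h f * norm2sq h φ := by
  have expand : h ^ 2 * gip φ (gconv h f φ)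
      = ∑ q : ZMod m × ZMod n, h ^ 4 * (f q *
          ∑ p : ZMod m × ZMod n, φ p * φ (p.1 - q.1, p.2 - q.2)) := by
    simp only [gip, gconv, Finset.mul_sum]
    rw [Finset.sum_comm]
    exact Finset.sum_congr rfl fun q _ => Finset.sum_congr rfl fun p _ => by ring
  have keyq : ∀ q : ZMod m × ZMod n,
      |∑ p : ZMod m × ZMod n, φ p * φ (p.1 - q.1, p.2 - q.2)|
        ≤ ∑ p : ZMod m × ZMod n, φ p ^ 2 := by
    intro q
    calc |∑ p : ZMod m × ZMod n, φ p * φ (p.1 - q.1, p.2 - q.2)|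
        ≤ ∑ p : ZMod m × ZMod n, |φ p * φ (p.1 - q.1, p.2 - q.2)| :=
          Finset.abs_sum_le_sum_abs _ _
      _ ≤ ∑ p : ZMod m × ZMod n, (φ p ^ 2 + φ (p.1 - q.1, p.2 - q.2) ^ 2) / 2 := by
          refine Finset.sum_le_sum fun p _ => ?_
          rw [abs_mul]
          nlinarith [sq_nonneg (|φ p| - |φ (p.1 - q.1, p.2 - q.2)|), sq_abs (φ p),
            sq_abs (φ (p.1 - q.1, p.2 - q.2)), abs_nonneg (φ p),
            abs_nonneg (φ (p.1 - q.1, p.2 - q.2))]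
      _ = ∑ p : ZMod m × ZMod n, φ p ^ 2 := by
          rw [← Finset.sum_div, Finset.sum_add_distrib, shift_sum_sq]
          ring
  have rhs : gconvOne h f * norm2sq h φ
      = ∑ q : ZMod m × ZMod n, h ^ 4 * (f q * ∑ p : ZMod m × ZMod n, φ p ^ 2) := by
    simp only [gconvOne, norm2sq, ← Finset.sum_mul, ← Finset.mul_sum]
    ring
  rw [expand, rhs]
  calc |∑ q : ZMod m × ZMod n, h ^ 4 * (f q *
          ∑ p : ZMod m × ZMod n, φ p * φ (p.1 - q.1, p.2 - q.2))|
      ≤ ∑ q : ZMod m × ZMod n, |h ^ 4 * (f q *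
          ∑ p : ZMod m × ZMod n, φ p * φ (p.1 - q.1, p.2 - q.2))| :=
        Finset.abs_sum_le_sum_abs _ _
    _ ≤ ∑ q : ZMod m × ZMod n, h ^ 4 * (f q * ∑ p : ZMod m × ZMod n, φ p ^ 2) := by
        refine Finset.sum_le_sum fun q _ => ?_
        rw [abs_mul, abs_mul, abs_of_nonneg (by positivity : (0:ℝ) ≤ h ^ 4),
          abs_of_nonneg (hf q)]
        have := keyq q
        have h4 : (0:ℝ) ≤ h ^ 4 := by positivity
        nlinarith [hf q, mul_nonneg h4 (hf q)]

private lemma Fdisc_lower {m n : ℕ} [NeZero m] [NeZero n] (h : ℝ) (hh : 0 < h)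
    (Jc Je : ZMod m × ZMod n → ℝ) (hJc0 : ∀ p, 0 ≤ Jc p) (hJe0 : ∀ p, 0 ≤ Je p)
    (γc γe : ℝ) (J : ZMod m × ZMod n → ℝ) (hJ : J = Jc - Je) (φ : ZMod m × ZMod n → ℝ) :
    (1 / 4) * norm4p4 h φ + ((γc - γe - 2 * gconvOne h Je) / 2) * norm2sq h φ
      ≤ Fdisc h γc γe J φ := by
  have hconvJ : ∀ p, gconv h J φ p = gconv h Jc φ p - gconv h Je φ p := by
    intro p
    simp [gconv, hJ, sub_mul, Finset.sum_sub_distrib, mul_sub]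
  have hgip : gip φ (gconv h J φ) = gip φ (gconv h Jc φ) - gip φ (gconv h Je φ) := by
    simp [gip, hconvJ, mul_sub, Finset.sum_sub_distrib]
  have hone : gconvOne h J = gconvOne h Jc - gconvOne h Je := by
    simp [gconvOne, hJ, Finset.sum_sub_distrib, mul_sub]
  have bc := gip_conv_abs_bound h hh.le Jc φ hJc0
  have be := gip_conv_abs_bound h hh.le Je φ hJe0
  rw [abs_le] at bc be
  unfold Fdisc
  rw [hgip, hone]
  nlinarith [bc.1, bc.2, be.1, be.2]

/-- lower bounds for the discrete energy `F`. -/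
theorem stmt7 (m n : ℕ) [NeZero m] [NeZero n] (h : ℝ) (hh : 0 < h)
    (Jc Je : ZMod m × ZMod n → ℝ) (hJc0 : ∀ p, 0 ≤ Jc p) (hJe0 : ∀ p, 0 ≤ Je p)
    (hJce : EvenKer Jc) (hJee : EvenKer Je)
    (γc γe : ℝ) (hγc : 0 ≤ γc) (hγe : 0 ≤ γe)
    (J : ZMod m × ZMod n → ℝ) (hJ : J = Jc - Je) :
    (∀ φ : ZMod m × ZMod n → ℝ,
        (1 / 8) * norm4p4 h φ
            ≤ Fdisc h γc γe J φ
              + (γc - γe - 2 * gconvOne h Je) ^ 2 / 2 * ((m : ℝ) * (n : ℝ) * h ^ 2)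
          ∧ (1 / 2) * norm2sq h φ
            ≤ Fdisc h γc γe J φ
              + (γc - γe - 2 * gconvOne h Je - 1) ^ 2 / 4 * ((m : ℝ) * (n : ℝ) * h ^ 2))
    ∧ (∃ C : ℝ, 0 ≤ C ∧ ∀ φ : ZMod m × ZMod n → ℝ, 0 ≤ Fdisc h γc γe J φ + C) := by
  obtain ⟨α, hα⟩ : ∃ a : ℝ, a = γc - γe - 2 * gconvOne h Je := ⟨_, rfl⟩
  rw [← hα]
  have hcard : (Finset.univ : Finset (ZMod m × ZMod n)).card = m * n := by
    simp [ZMod.card]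
  have hN0 : ∀ φ : ZMod m × ZMod n → ℝ, 0 ≤ norm2sq h φ := by
    intro φ
    unfold norm2sq
    positivity
  have main : ∀ φ : ZMod m × ZMod n → ℝ,
      (1 / 8) * norm4p4 h φ
          ≤ Fdisc h γc γe J φ + α ^ 2 / 2 * ((m : ℝ) * (n : ℝ) * h ^ 2)
        ∧ (1 / 2) * norm2sq h φ
          ≤ Fdisc h γc γe J φ + (α - 1) ^ 2 / 4 * ((m : ℝ) * (n : ℝ) * h ^ 2) := by
    intro φ
    have hlow := Fdisc_lower h hh Jc Je hJc0 hJe0 γc γe J hJ φ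
    rw [← hα] at hlow
    constructor
    · have S1 : (0:ℝ) ≤ ∑ p : ZMod m × ZMod n,
          ((1/8) * φ p ^ 4 + (α/2) * φ p ^ 2 + α ^ 2 / 2) := by
        refine Finset.sum_nonneg fun p _ => ?_
        nlinarith [sq_nonneg (φ p ^ 2 + 2 * α)]
      have e1 : h ^ 2 * ∑ p : ZMod m × ZMod n,
            ((1/8) * φ p ^ 4 + (α/2) * φ p ^ 2 + α ^ 2 / 2)
          = (1/8) * norm4p4 h φ + (α/2) * norm2sq h φ
            + α ^ 2 / 2 * ((m : ℝ) * (n : ℝ) * h ^ 2) := by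
        rw [Finset.sum_add_distrib, Finset.sum_add_distrib, Finset.sum_const, hcard,
          ← Finset.mul_sum, ← Finset.mul_sum, nsmul_eq_mul]
        unfold norm4p4 norm2sq
        push_cast
        ring
      have h2S : (0:ℝ) ≤ h ^ 2 * ∑ p : ZMod m × ZMod n,
          ((1/8) * φ p ^ 4 + (α/2) * φ p ^ 2 + α ^ 2 / 2) :=
        mul_nonneg (by positivity) S1
      rw [e1] at h2S
      linarith
    · have S2 : (0:ℝ) ≤ ∑ p : ZMod m × ZMod n,
          ((1/4) * φ p ^ 4 + ((α - 1)/2) * φ p ^ 2 + (α - 1) ^ 2 / 4) := by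
        refine Finset.sum_nonneg fun p _ => ?_
        nlinarith [sq_nonneg (φ p ^ 2 + (α - 1))]
      have e2 : h ^ 2 * ∑ p : ZMod m × ZMod n,
            ((1/4) * φ p ^ 4 + ((α - 1)/2) * φ p ^ 2 + (α - 1) ^ 2 / 4)
          = (1/4) * norm4p4 h φ + ((α - 1)/2) * norm2sq h φ
            + (α - 1) ^ 2 / 4 * ((m : ℝ) * (n : ℝ) * h ^ 2) := by
        rw [Finset.sum_add_distrib, Finset.sum_add_distrib, Finset.sum_const, hcard,
          ← Finset.mul_sum, ← Finset.mul_sum, nsmul_eq_mul]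
        unfold norm4p4 norm2sq
        push_cast
        ring
      have h2S : (0:ℝ) ≤ h ^ 2 * ∑ p : ZMod m × ZMod n,
          ((1/4) * φ p ^ 4 + ((α - 1)/2) * φ p ^ 2 + (α - 1) ^ 2 / 4) :=
        mul_nonneg (by positivity) S2
      rw [e2] at h2S
      linarith
  refine ⟨main, ⟨(α - 1) ^ 2 / 4 * ((m : ℝ) * (n : ℝ) * h ^ 2), by positivity, fun φ => ?_⟩⟩
  have := (main φ).2
  have := hN0 φ
  linarith
end

section
/- Let 𝖩 = 𝖩_c − 𝖩_e with 𝖩_c, 𝖩_e smooth, nonnegative, even, Ω-periodic, and let J be the vertex grid restriction of 𝖩. Then there exists C₇ > 0 depending only on 𝖩, L₁, L₂ (not on the grid) such that for every grid (m·h = L₁, n·h = L₂), all periodic grid functions e^{k−1}, e^k, e^{k+1}, and all α > 0: −2h²⟨[J⋆ê^{k+1/2}], Δ_h e^{k+1/2}⟩ ≤ (C₇/α)(‖e^k‖₂² + ‖e^{k−1}‖₂²) + α‖∇_h e^{k+1/2}‖₂², where e^{k+1/2} = (1/2)(e^k + e^{k+1}) and ê^{k+1/2} = (3/2)e^k − (1/2)e^{k−1}.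 -/
open scoped BigOperators
open MeasureTheory

section AuxStmt15
variable {m n : ℕ} [NeZero m] [NeZero n]

lemma stmt15_shift_fst (f : ZMod m × ZMod n → ℝ) :
    ∑ p : ZMod m × ZMod n, f (p.1 + 1, p.2) = ∑ p : ZMod m × ZMod n, f p :=
  Fintype.sum_equiv (Equiv.prodCongr (Equiv.addRight (1 : ZMod m)) (Equiv.refl (ZMod n))) _ _
    (fun _ => rfl)

lemma stmt15_shift_snd (f : ZMod m × ZMod n → ℝ) :
    ∑ p : ZMod m × ZMod n, f (p.1, p.2 + 1) = ∑ p : ZMod m × ZMod n, f p :=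
  Fintype.sum_equiv (Equiv.prodCongr (Equiv.refl (ZMod m)) (Equiv.addRight (1 : ZMod n))) _ _
    (fun _ => rfl)

lemma stmt15_sub_reindex (f : ZMod m × ZMod n → ℝ) (p : ZMod m × ZMod n) :
    ∑ q : ZMod m × ZMod n, f (p.1 - q.1, p.2 - q.2) = ∑ q : ZMod m × ZMod n, f q :=
  Fintype.sum_equiv (Equiv.subLeft p) _ _ (fun _ => rfl)

lemma stmt15_sbp (A v : ZMod m × ZMod n → ℝ) :
    ∑ p : ZMod m × ZMod n,
      A p * (v (p.1 + 1, p.2) + v (p.1 - 1, p.2) + v (p.1, p.2 + 1) + v (p.1, p.2 - 1) - 4 * v p)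
      = -∑ p : ZMod m × ZMod n,
        ((A (p.1 + 1, p.2) - A p) * (v (p.1 + 1, p.2) - v p)
          + (A (p.1, p.2 + 1) - A p) * (v (p.1, p.2 + 1) - v p)) := by
  have e1 : ∑ p : ZMod m × ZMod n, A (p.1 + 1, p.2) * v p
      = ∑ p : ZMod m × ZMod n, A p * v (p.1 - 1, p.2) := by
    simpa [add_sub_cancel_right] using stmt15_shift_fst (fun p => A p * v (p.1 - 1, p.2))
  have e2 : ∑ p : ZMod m × ZMod n, A (p.1, p.2 + 1) * v p
      = ∑ p : ZMod m × ZMod n, A p * v (p.1, p.2 - 1) := by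
    simpa [add_sub_cancel_right] using stmt15_shift_snd (fun p => A p * v (p.1, p.2 - 1))
  have e3 : ∑ p : ZMod m × ZMod n, A (p.1 + 1, p.2) * v (p.1 + 1, p.2)
      = ∑ p : ZMod m × ZMod n, A p * v p := stmt15_shift_fst (fun p => A p * v p)
  have e4 : ∑ p : ZMod m × ZMod n, A (p.1, p.2 + 1) * v (p.1, p.2 + 1)
      = ∑ p : ZMod m × ZMod n, A p * v p := stmt15_shift_snd (fun p => A p * v p)
  have L : ∑ p : ZMod m × ZMod n,
      A p * (v (p.1 + 1, p.2) + v (p.1 - 1, p.2) + v (p.1, p.2 + 1) + v (p.1, p.2 - 1) - 4 * v p)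
      = ((((∑ p : ZMod m × ZMod n, A p * v (p.1 + 1, p.2))
        + ∑ p : ZMod m × ZMod n, A p * v (p.1 - 1, p.2))
        + ∑ p : ZMod m × ZMod n, A p * v (p.1, p.2 + 1))
        + ∑ p : ZMod m × ZMod n, A p * v (p.1, p.2 - 1))
        - 4 * ∑ p : ZMod m × ZMod n, A p * v p := by
    rw [Finset.mul_sum, ← Finset.sum_add_distrib, ← Finset.sum_add_distrib,
      ← Finset.sum_add_distrib, ← Finset.sum_sub_distrib]
    exact Finset.sum_congr rfl (fun p _ => by ring)
  have R : ∑ p : ZMod m × ZMod n,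
        ((A (p.1 + 1, p.2) - A p) * (v (p.1 + 1, p.2) - v p)
          + (A (p.1, p.2 + 1) - A p) * (v (p.1, p.2 + 1) - v p))
      = ((((((∑ p : ZMod m × ZMod n, A (p.1 + 1, p.2) * v (p.1 + 1, p.2))
        - ∑ p : ZMod m × ZMod n, A (p.1 + 1, p.2) * v p)
        - ∑ p : ZMod m × ZMod n, A p * v (p.1 + 1, p.2))
        + ∑ p : ZMod m × ZMod n, A (p.1, p.2 + 1) * v (p.1, p.2 + 1))
        - ∑ p : ZMod m × ZMod n, A (p.1, p.2 + 1) * v p)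
        - ∑ p : ZMod m × ZMod n, A p * v (p.1, p.2 + 1))
        + 2 * ∑ p : ZMod m × ZMod n, A p * v p := by
    rw [Finset.mul_sum, ← Finset.sum_sub_distrib, ← Finset.sum_sub_distrib,
      ← Finset.sum_add_distrib, ← Finset.sum_sub_distrib, ← Finset.sum_sub_distrib,
      ← Finset.sum_add_distrib]
    exact Finset.sum_congr rfl (fun p _ => by ring)
  rw [L, R, e1, e2, e3, e4]
  ring

lemma stmt15_conv_diff_fst (h : ℝ) (f φ : ZMod m × ZMod n → ℝ) (p : ZMod m × ZMod n) :
    gconv h f φ (p.1 + 1, p.2) - gconv h f φ p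
      = h ^ 2 * ∑ q : ZMod m × ZMod n,
          (f (q.1 + 1, q.2) - f q) * φ (p.1 - q.1, p.2 - q.2) := by
  have e : ∑ q : ZMod m × ZMod n, f (q.1 + 1, q.2) * φ (p.1 - q.1, p.2 - q.2)
      = ∑ q : ZMod m × ZMod n, f q * φ (p.1 + 1 - q.1, p.2 - q.2) := by
    simpa [add_sub_add_right_eq_sub] using
      stmt15_shift_fst (fun q => f q * φ (p.1 + 1 - q.1, p.2 - q.2))
  simp only [gconv]
  rw [← mul_sub, ← e, ← Finset.sum_sub_distrib]
  exact congrArg _ (Finset.sum_congr rfl (fun q _ => by ring))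

lemma stmt15_conv_diff_snd (h : ℝ) (f φ : ZMod m × ZMod n → ℝ) (p : ZMod m × ZMod n) :
    gconv h f φ (p.1, p.2 + 1) - gconv h f φ p
      = h ^ 2 * ∑ q : ZMod m × ZMod n,
          (f (q.1, q.2 + 1) - f q) * φ (p.1 - q.1, p.2 - q.2) := by
  have e : ∑ q : ZMod m × ZMod n, f (q.1, q.2 + 1) * φ (p.1 - q.1, p.2 - q.2)
      = ∑ q : ZMod m × ZMod n, f q * φ (p.1 - q.1, p.2 + 1 - q.2) := by
    simpa [add_sub_add_right_eq_sub] using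
      stmt15_shift_snd (fun q => f q * φ (p.1 - q.1, p.2 + 1 - q.2))
  simp only [gconv]
  rw [← mul_sub, ← e, ← Finset.sum_sub_distrib]
  exact congrArg _ (Finset.sum_congr rfl (fun q _ => by ring))

lemma stmt15_val_succ {k : ℕ} [NeZero k] (a : ZMod k) :
    ((a + 1).val = a.val + 1 ∧ a.val + 1 < k) ∨ (a.val + 1 = k ∧ (a + 1).val = 0) := by
  have hm : 0 < k := Nat.pos_of_ne_zero (NeZero.ne k)
  have hv : a.val < k := ZMod.val_lt a
  have h1 : (a + 1).val = (a.val + (1 : ZMod k).val) % k := ZMod.val_add a 1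
  rcases Nat.lt_or_ge (a.val + 1) k with hlt | hge
  · left
    have hm1 : 1 < k := by omega
    rw [ZMod.val_one_eq_one_mod, Nat.mod_eq_of_lt hm1] at h1
    exact ⟨by rw [h1, Nat.mod_eq_of_lt hlt], hlt⟩
  · right
    have heq : a.val + 1 = k := by omega
    refine ⟨heq, ?_⟩
    rcases Nat.eq_or_lt_of_le (Nat.one_le_iff_ne_zero.mpr (NeZero.ne k)) with h1m | h1m
    · have : ∀ b : ZMod k, b.val = 0 := fun b => by have := ZMod.val_lt b; omega
      exact this _
    · rw [ZMod.val_one_eq_one_mod, Nat.mod_eq_of_lt h1m, heq, Nat.mod_self] at h1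
      exact h1

lemma stmt15_young {a1 a2 b1 b2 α : ℝ} (hα : 0 < α) :
    2 * (a1 * b1 + a2 * b2) ≤ (1 / α) * (a1 ^ 2 + a2 ^ 2) + α * (b1 ^ 2 + b2 ^ 2) := by
  have key : (1 / α) * (a1 ^ 2 + a2 ^ 2) + α * (b1 ^ 2 + b2 ^ 2) - 2 * (a1 * b1 + a2 * b2)
      = ((a1 - α * b1) ^ 2 + (a2 - α * b2) ^ 2) / α := by
    field_simp; ring
  nlinarith [div_nonneg (by positivity : (0:ℝ) ≤ (a1 - α * b1) ^ 2 + (a2 - α * b2) ^ 2) hα.le]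

end AuxStmt15

set_option maxHeartbeats 2000000 in
/-- grid-independent estimate for the convolution term in the
error equation, Proposition `estimate-linear`, inequality (est-linear-1). -/

theorem stmt15 (L₁ L₂ : ℝ) (hL₁ : 0 < L₁) (hL₂ : 0 < L₂)
    (Jc Je : ℝ × ℝ → ℝ) (hJcs : ContDiff ℝ (⊤ : ℕ∞) Jc) (hJes : ContDiff ℝ (⊤ : ℕ∞) Je)
    (hJc0 : ∀ x, 0 ≤ Jc x) (hJe0 : ∀ x, 0 ≤ Je x)
    (hJcp : PerFun L₁ L₂ Jc) (hJep : PerFun L₁ L₂ Je)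
    (hJce : ∀ x : ℝ × ℝ, Jc (-x.1, -x.2) = Jc x)
    (hJee : ∀ x : ℝ × ℝ, Je (-x.1, -x.2) = Je x)
    (J : ℝ × ℝ → ℝ) (hJ : J = fun x => Jc x - Je x) :
    ∃ C₇ > (0:ℝ), ∀ (m n : ℕ) [NeZero m] [NeZero n] (h : ℝ), 0 < h →
      (m : ℝ) * h = L₁ → (n : ℝ) * h = L₂ →
      ∀ ekm ek ekp : ZMod m × ZMod n → ℝ, ∀ α : ℝ, 0 < α →
        -2 * h ^ 2 * gip (gconv h (gridRestrict m n h J)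
              (fun p => (3 / 2) * ek p - (1 / 2) * ekm p))
            (glap h (fun p => (1 / 2) * (ek p + ekp p)))
          ≤ C₇ / α * (norm2sq h ek + norm2sq h ekm)
            + α * gradNormSq (fun p => (1 / 2) * (ek p + ekp p)) := by
  subst hJ
  set J : ℝ × ℝ → ℝ := fun x => Jc x - Je x with hJdef
  have hJs : ContDiff ℝ (⊤ : ℕ∞) J := hJcs.sub hJes
  have hJd : Differentiable ℝ J := hJs.differentiable (by simp)
  have hJper1 : ∀ x : ℝ × ℝ, J (x.1 + L₁, x.2) = J x := by
    intro x
    show Jc (x.1 + L₁, x.2) - Je (x.1 + L₁, x.2) = Jc x - Je x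
    rw [(hJcp x).1, (hJep x).1]
  have hJper2 : ∀ x : ℝ × ℝ, J (x.1, x.2 + L₂) = J x := by
    intro x
    show Jc (x.1, x.2 + L₂) - Je (x.1, x.2 + L₂) = Jc x - Je x
    rw [(hJcp x).2, (hJep x).2]
  set S : Set (ℝ × ℝ) := Set.Icc (-L₁) L₁ ×ˢ Set.Icc (-L₂) L₂ with hSdef
  have hScomp : IsCompact S := isCompact_Icc.prod isCompact_Icc
  have hSconv : Convex ℝ S := (convex_Icc _ _).prod (convex_Icc _ _)
  have hfc : ContinuousOn (fderiv ℝ J) S := (hJs.continuous_fderiv (by simp)).continuousOn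
  obtain ⟨C, hC⟩ := hScomp.exists_bound_of_continuousOn hfc
  set K : ℝ := max C 0 with hKdef
  have hK0 : 0 ≤ K := le_max_right _ _
  have hLip : ∀ x ∈ S, ∀ y ∈ S, |J y - J x| ≤ K * ‖y - x‖ := by
    intro x hx y hy
    have := Convex.norm_image_sub_le_of_norm_fderiv_le (C := K) (fun z _ => hJd z)
      (fun z hz => le_trans (hC z hz) (le_max_left _ _)) hSconv hx hy
    simpa [Real.norm_eq_abs] using this
  refine ⟨10 * K ^ 2 * (L₁ * L₂) ^ 2 + 1, by positivity, ?_⟩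
  intro m n _ _ h hh hm hn ekm ek ekp α hα
  have hne : h ≠ 0 := ne_of_gt hh
  have hm1 : (1 : ℝ) ≤ (m : ℝ) := by
    have := Nat.one_le_iff_ne_zero.mpr (NeZero.ne m); exact_mod_cast this
  have hn1 : (1 : ℝ) ≤ (n : ℝ) := by
    have := Nat.one_le_iff_ne_zero.mpr (NeZero.ne n); exact_mod_cast this
  have hhL1 : h ≤ L₁ := by nlinarith
  have hhL2 : h ≤ L₂ := by nlinarith
  have hmn : (m : ℝ) * (n : ℝ) * h ^ 2 = L₁ * L₂ := by
    rw [← hm, ← hn]; ring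
  have coord1 : ∀ a : ZMod m, ((a.val : ℝ) - 1 / 2) * h ∈ Set.Icc (-L₁) L₁
      ∧ ((a.val : ℝ) + 1 / 2) * h ∈ Set.Icc (-L₁) L₁ := by
    intro a
    have hv : (a.val : ℝ) + 1 ≤ (m : ℝ) := by
      have : a.val + 1 ≤ m := ZMod.val_lt a; exact_mod_cast this
    have hv0 : (0 : ℝ) ≤ (a.val : ℝ) := Nat.cast_nonneg _
    refine ⟨⟨?_, ?_⟩, ?_, ?_⟩ <;> nlinarith [hh.le]
  have coord2 : ∀ b : ZMod n, ((b.val : ℝ) - 1 / 2) * h ∈ Set.Icc (-L₂) L₂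
      ∧ ((b.val : ℝ) + 1 / 2) * h ∈ Set.Icc (-L₂) L₂ := by
    intro b
    have hv : (b.val : ℝ) + 1 ≤ (n : ℝ) := by
      have : b.val + 1 ≤ n := ZMod.val_lt b; exact_mod_cast this
    have hv0 : (0 : ℝ) ≤ (b.val : ℝ) := Nat.cast_nonneg _
    refine ⟨⟨?_, ?_⟩, ?_, ?_⟩ <;> nlinarith [hh.le]
  have hJg1 : ∀ q : ZMod m × ZMod n,
      |gridRestrict m n h J (q.1 + 1, q.2) - gridRestrict m n h J q| ≤ K * h := by
    intro q
    set y2 : ℝ := ((q.2.val : ℝ) - 1 / 2) * h with hy2def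
    have hy2 : y2 ∈ Set.Icc (-L₂) L₂ := (coord2 q.2).1
    have hx1 : ((q.1.val : ℝ) - 1 / 2) * h ∈ Set.Icc (-L₁) L₁ := (coord1 q.1).1
    have hx2 : ((q.1.val : ℝ) + 1 / 2) * h ∈ Set.Icc (-L₁) L₁ := (coord1 q.1).2
    have hpt : gridRestrict m n h J (q.1 + 1, q.2)
        = J (((q.1.val : ℝ) + 1 / 2) * h, y2) := by
      show J ((((q.1 + 1 : ZMod m).val : ℝ) - 1 / 2) * h, y2) = _
      rcases stmt15_val_succ q.1 with ⟨hv, _⟩ | ⟨hv, hv0⟩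
      · have harg : (((q.1 + 1 : ZMod m).val : ℝ) - 1 / 2) * h
            = ((q.1.val : ℝ) + 1 / 2) * h := by rw [hv]; push_cast; ring
        rw [harg]
      · have hq : (q.1.val : ℝ) = (m : ℝ) - 1 := by
          have : ((q.1.val : ℝ) + 1) = (m : ℝ) := by exact_mod_cast hv
          linarith
        have harg : ((q.1.val : ℝ) + 1 / 2) * h
            = (((q.1 + 1 : ZMod m).val : ℝ) - 1 / 2) * h + L₁ := by
          rw [hv0, ← hm, hq]; push_cast; ring
        calc J ((((q.1 + 1 : ZMod m).val : ℝ) - 1 / 2) * h, y2)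
            = J ((((q.1 + 1 : ZMod m).val : ℝ) - 1 / 2) * h + L₁, y2) :=
              (hJper1 ((((q.1 + 1 : ZMod m).val : ℝ) - 1 / 2) * h, y2)).symm
          _ = J (((q.1.val : ℝ) + 1 / 2) * h, y2) := by rw [← harg]
    have hpt0 : gridRestrict m n h J q = J (((q.1.val : ℝ) - 1 / 2) * h, y2) := rfl
    rw [hpt, hpt0]
    have hlip := hLip (((q.1.val : ℝ) - 1 / 2) * h, y2) ⟨hx1, hy2⟩
      (((q.1.val : ℝ) + 1 / 2) * h, y2) ⟨hx2, hy2⟩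
    have hdiff : ((((q.1.val : ℝ) + 1 / 2) * h, y2) : ℝ × ℝ)
        - ((((q.1.val : ℝ) - 1 / 2) * h, y2) : ℝ × ℝ) = ((h : ℝ), (0 : ℝ)) := by
      rw [Prod.mk_sub_mk, Prod.mk.injEq]; constructor <;> ring
    rw [hdiff] at hlip
    have hnorm : ‖((h : ℝ), (0 : ℝ))‖ = h := by
      rw [Prod.norm_def]
      simp [abs_of_pos hh, hh.le]
    rw [hnorm] at hlip
    exact hlip
  have hJg2 : ∀ q : ZMod m × ZMod n,
      |gridRestrict m n h J (q.1, q.2 + 1) - gridRestrict m n h J q| ≤ K * h := by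
    intro q
    set y1 : ℝ := ((q.1.val : ℝ) - 1 / 2) * h with hy1def
    have hy1 : y1 ∈ Set.Icc (-L₁) L₁ := (coord1 q.1).1
    have hx1 : ((q.2.val : ℝ) - 1 / 2) * h ∈ Set.Icc (-L₂) L₂ := (coord2 q.2).1
    have hx2 : ((q.2.val : ℝ) + 1 / 2) * h ∈ Set.Icc (-L₂) L₂ := (coord2 q.2).2
    have hpt : gridRestrict m n h J (q.1, q.2 + 1)
        = J (y1, ((q.2.val : ℝ) + 1 / 2) * h) := by
      show J (y1, (((q.2 + 1 : ZMod n).val : ℝ) - 1 / 2) * h) = _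
      rcases stmt15_val_succ q.2 with ⟨hv, _⟩ | ⟨hv, hv0⟩
      · have harg : (((q.2 + 1 : ZMod n).val : ℝ) - 1 / 2) * h
            = ((q.2.val : ℝ) + 1 / 2) * h := by rw [hv]; push_cast; ring
        rw [harg]
      · have hq : (q.2.val : ℝ) = (n : ℝ) - 1 := by
          have : ((q.2.val : ℝ) + 1) = (n : ℝ) := by exact_mod_cast hv
          linarith
        have harg : ((q.2.val : ℝ) + 1 / 2) * h
            = (((q.2 + 1 : ZMod n).val : ℝ) - 1 / 2) * h + L₂ := by
          rw [hv0, ← hn, hq]; push_cast; ring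
        calc J (y1, (((q.2 + 1 : ZMod n).val : ℝ) - 1 / 2) * h)
            = J (y1, (((q.2 + 1 : ZMod n).val : ℝ) - 1 / 2) * h + L₂) :=
              (hJper2 (y1, (((q.2 + 1 : ZMod n).val : ℝ) - 1 / 2) * h)).symm
          _ = J (y1, ((q.2.val : ℝ) + 1 / 2) * h) := by rw [← harg]
    have hpt0 : gridRestrict m n h J q = J (y1, ((q.2.val : ℝ) - 1 / 2) * h) := rfl
    rw [hpt, hpt0]
    have hlip := hLip (y1, ((q.2.val : ℝ) - 1 / 2) * h) ⟨hy1, hx1⟩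
      (y1, ((q.2.val : ℝ) + 1 / 2) * h) ⟨hy1, hx2⟩
    have hdiff : ((y1, ((q.2.val : ℝ) + 1 / 2) * h) : ℝ × ℝ)
        - ((y1, ((q.2.val : ℝ) - 1 / 2) * h) : ℝ × ℝ) = ((0 : ℝ), (h : ℝ)) := by
      rw [Prod.mk_sub_mk, Prod.mk.injEq]; constructor <;> ring
    rw [hdiff] at hlip
    have hnorm : ‖((0 : ℝ), (h : ℝ))‖ = h := by
      rw [Prod.norm_def]
      simp [abs_of_pos hh, hh.le]
    rw [hnorm] at hlip
    exact hlip
  set eh : ZMod m × ZMod n → ℝ := fun p => 3 / 2 * ek p - 1 / 2 * ekm p with hehdef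
  set v : ZMod m × ZMod n → ℝ := fun p => 1 / 2 * (ek p + ekp p) with hvdef
  set Jg : ZMod m × ZMod n → ℝ := gridRestrict m n h J with hJgdef
  set A : ZMod m × ZMod n → ℝ := gconv h Jg eh with hAdef
  set Se : ℝ := ∑ q : ZMod m × ZMod n, eh q ^ 2 with hSedef
  have hSe0 : 0 ≤ Se := Finset.sum_nonneg fun q _ => sq_nonneg _
  have hcard : (Finset.univ : Finset (ZMod m × ZMod n)).card = m * n := by
    simp [ZMod.card]
  -- pointwise bounds on the discrete gradient of A
  have keyQ1 : ∀ p : ZMod m × ZMod n, (A (p.1 + 1, p.2) - A p) ^ 2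
      ≤ (h ^ 2) ^ 2 * (((m : ℝ) * n) * (K * h) ^ 2 * Se) := by
    intro p
    rw [hAdef, stmt15_conv_diff_fst]
    have hcs := Finset.sum_mul_sq_le_sq_mul_sq Finset.univ
      (fun q : ZMod m × ZMod n => Jg (q.1 + 1, q.2) - Jg q)
      (fun q : ZMod m × ZMod n => eh (p.1 - q.1, p.2 - q.2))
    have hΔ : ∑ q : ZMod m × ZMod n, (Jg (q.1 + 1, q.2) - Jg q) ^ 2
        ≤ ((m : ℝ) * n) * (K * h) ^ 2 := by
      calc ∑ q : ZMod m × ZMod n, (Jg (q.1 + 1, q.2) - Jg q) ^ 2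
          ≤ (Finset.univ : Finset (ZMod m × ZMod n)).card • ((K * h) ^ 2) :=
            Finset.sum_le_card_nsmul _ _ _ (fun q _ =>
              sq_le_sq' (abs_le.mp (hJg1 q)).1 (abs_le.mp (hJg1 q)).2)
        _ = ((m : ℝ) * n) * (K * h) ^ 2 := by
            rw [nsmul_eq_mul, hcard]; push_cast; ring
    have hre : ∑ q : ZMod m × ZMod n, eh (p.1 - q.1, p.2 - q.2) ^ 2 = Se :=
      stmt15_sub_reindex (fun q => eh q ^ 2) p
    calc (h ^ 2 * ∑ q : ZMod m × ZMod n,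
          (Jg (q.1 + 1, q.2) - Jg q) * eh (p.1 - q.1, p.2 - q.2)) ^ 2
        = (h ^ 2) ^ 2 * (∑ q : ZMod m × ZMod n,
            (Jg (q.1 + 1, q.2) - Jg q) * eh (p.1 - q.1, p.2 - q.2)) ^ 2 := by ring
      _ ≤ (h ^ 2) ^ 2 * (((m : ℝ) * n) * (K * h) ^ 2 * Se) := by
          apply mul_le_mul_of_nonneg_left _ (by positivity)
          calc (∑ q : ZMod m × ZMod n,
                (Jg (q.1 + 1, q.2) - Jg q) * eh (p.1 - q.1, p.2 - q.2)) ^ 2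
              ≤ (∑ q : ZMod m × ZMod n, (Jg (q.1 + 1, q.2) - Jg q) ^ 2)
                * ∑ q : ZMod m × ZMod n, eh (p.1 - q.1, p.2 - q.2) ^ 2 := hcs
            _ = (∑ q : ZMod m × ZMod n, (Jg (q.1 + 1, q.2) - Jg q) ^ 2) * Se := by rw [hre]
            _ ≤ ((m : ℝ) * n) * (K * h) ^ 2 * Se :=
                mul_le_mul_of_nonneg_right hΔ hSe0
  have keyQ2 : ∀ p : ZMod m × ZMod n, (A (p.1, p.2 + 1) - A p) ^ 2
      ≤ (h ^ 2) ^ 2 * (((m : ℝ) * n) * (K * h) ^ 2 * Se) := by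
    intro p
    rw [hAdef, stmt15_conv_diff_snd]
    have hcs := Finset.sum_mul_sq_le_sq_mul_sq Finset.univ
      (fun q : ZMod m × ZMod n => Jg (q.1, q.2 + 1) - Jg q)
      (fun q : ZMod m × ZMod n => eh (p.1 - q.1, p.2 - q.2))
    have hΔ : ∑ q : ZMod m × ZMod n, (Jg (q.1, q.2 + 1) - Jg q) ^ 2
        ≤ ((m : ℝ) * n) * (K * h) ^ 2 := by
      calc ∑ q : ZMod m × ZMod n, (Jg (q.1, q.2 + 1) - Jg q) ^ 2
          ≤ (Finset.univ : Finset (ZMod m × ZMod n)).card • ((K * h) ^ 2) :=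
            Finset.sum_le_card_nsmul _ _ _ (fun q _ =>
              sq_le_sq' (abs_le.mp (hJg2 q)).1 (abs_le.mp (hJg2 q)).2)
        _ = ((m : ℝ) * n) * (K * h) ^ 2 := by
            rw [nsmul_eq_mul, hcard]; push_cast; ring
    have hre : ∑ q : ZMod m × ZMod n, eh (p.1 - q.1, p.2 - q.2) ^ 2 = Se :=
      stmt15_sub_reindex (fun q => eh q ^ 2) p
    calc (h ^ 2 * ∑ q : ZMod m × ZMod n,
          (Jg (q.1, q.2 + 1) - Jg q) * eh (p.1 - q.1, p.2 - q.2)) ^ 2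
        = (h ^ 2) ^ 2 * (∑ q : ZMod m × ZMod n,
            (Jg (q.1, q.2 + 1) - Jg q) * eh (p.1 - q.1, p.2 - q.2)) ^ 2 := by ring
      _ ≤ (h ^ 2) ^ 2 * (((m : ℝ) * n) * (K * h) ^ 2 * Se) := by
          apply mul_le_mul_of_nonneg_left _ (by positivity)
          calc (∑ q : ZMod m × ZMod n,
                (Jg (q.1, q.2 + 1) - Jg q) * eh (p.1 - q.1, p.2 - q.2)) ^ 2
              ≤ (∑ q : ZMod m × ZMod n, (Jg (q.1, q.2 + 1) - Jg q) ^ 2)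
                * ∑ q : ZMod m × ZMod n, eh (p.1 - q.1, p.2 - q.2) ^ 2 := hcs
            _ = (∑ q : ZMod m × ZMod n, (Jg (q.1, q.2 + 1) - Jg q) ^ 2) * Se := by rw [hre]
            _ ≤ ((m : ℝ) * n) * (K * h) ^ 2 * Se :=
                mul_le_mul_of_nonneg_right hΔ hSe0
  have hgradA : ∑ p : ZMod m × ZMod n,
      ((A (p.1 + 1, p.2) - A p) ^ 2 + (A (p.1, p.2 + 1) - A p) ^ 2)
      ≤ 2 * K ^ 2 * (L₁ * L₂) ^ 2 * (h ^ 2 * Se) := by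
    have halg : ((m : ℝ) * n) * (2 * ((h ^ 2) ^ 2 * (((m : ℝ) * n) * (K * h) ^ 2 * Se)))
        = 2 * K ^ 2 * (L₁ * L₂) ^ 2 * (h ^ 2 * Se) := by
      rw [← hmn]; ring
    calc ∑ p : ZMod m × ZMod n,
        ((A (p.1 + 1, p.2) - A p) ^ 2 + (A (p.1, p.2 + 1) - A p) ^ 2)
        ≤ (Finset.univ : Finset (ZMod m × ZMod n)).card
            • (2 * ((h ^ 2) ^ 2 * (((m : ℝ) * n) * (K * h) ^ 2 * Se))) :=
          Finset.sum_le_card_nsmul _ _ _ (fun p _ => by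
            have := keyQ1 p; have := keyQ2 p; linarith)
      _ = ((m : ℝ) * n) * (2 * ((h ^ 2) ^ 2 * (((m : ℝ) * n) * (K * h) ^ 2 * Se))) := by
          rw [nsmul_eq_mul, hcard]; push_cast; ring
      _ = 2 * K ^ 2 * (L₁ * L₂) ^ 2 * (h ^ 2 * Se) := halg
  have heqA : -2 * h ^ 2 * gip A (glap h v)
      = 2 * ∑ p : ZMod m × ZMod n,
        ((A (p.1 + 1, p.2) - A p) * (v (p.1 + 1, p.2) - v p)
          + (A (p.1, p.2 + 1) - A p) * (v (p.1, p.2 + 1) - v p)) := by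
    have hstep : ∀ p : ZMod m × ZMod n, -2 * h ^ 2 * (A p * glap h v p)
        = -2 * (A p * (v (p.1 + 1, p.2) + v (p.1 - 1, p.2) + v (p.1, p.2 + 1)
            + v (p.1, p.2 - 1) - 4 * v p)) := by
      intro p
      simp only [glap]
      field_simp
    calc -2 * h ^ 2 * gip A (glap h v)
        = ∑ p : ZMod m × ZMod n, -2 * h ^ 2 * (A p * glap h v p) := by
          simp only [gip, Finset.mul_sum]
      _ = ∑ p : ZMod m × ZMod n, -2 * (A p * (v (p.1 + 1, p.2) + v (p.1 - 1, p.2)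
            + v (p.1, p.2 + 1) + v (p.1, p.2 - 1) - 4 * v p)) :=
          Finset.sum_congr rfl (fun p _ => hstep p)
      _ = -2 * ∑ p : ZMod m × ZMod n, A p * (v (p.1 + 1, p.2) + v (p.1 - 1, p.2)
            + v (p.1, p.2 + 1) + v (p.1, p.2 - 1) - 4 * v p) := by
          rw [Finset.mul_sum]
      _ = -2 * -∑ p : ZMod m × ZMod n,
            ((A (p.1 + 1, p.2) - A p) * (v (p.1 + 1, p.2) - v p)
              + (A (p.1, p.2 + 1) - A p) * (v (p.1, p.2 + 1) - v p)) := by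
          rw [stmt15_sbp]
      _ = _ := by ring
  have hN1 : 0 ≤ norm2sq h ek := by
    simp only [norm2sq]; positivity
  have hN2 : 0 ≤ norm2sq h ekm := by
    simp only [norm2sq]; positivity
  have hSeN : h ^ 2 * Se ≤ 5 * (norm2sq h ek + norm2sq h ekm) := by
    have hsum2 : Se ≤ 5 * ∑ q : ZMod m × ZMod n, (ek q ^ 2 + ekm q ^ 2) := by
      rw [Finset.mul_sum]
      apply Finset.sum_le_sum
      intro q _
      simp only [hehdef]
      nlinarith [sq_nonneg (ek q + ekm q), sq_nonneg (ek q - ekm q)]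
    calc h ^ 2 * Se ≤ h ^ 2 * (5 * ∑ q : ZMod m × ZMod n, (ek q ^ 2 + ekm q ^ 2)) :=
        mul_le_mul_of_nonneg_left hsum2 (sq_nonneg h)
      _ = 5 * (norm2sq h ek + norm2sq h ekm) := by
        simp only [norm2sq, Finset.sum_add_distrib]; ring
  rw [heqA]
  have hG : gradNormSq v = ∑ p : ZMod m × ZMod n,
      ((v (p.1 + 1, p.2) - v p) ^ 2 + (v (p.1, p.2 + 1) - v p) ^ 2) := rfl
  calc 2 * ∑ p : ZMod m × ZMod n,
        ((A (p.1 + 1, p.2) - A p) * (v (p.1 + 1, p.2) - v p)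
          + (A (p.1, p.2 + 1) - A p) * (v (p.1, p.2 + 1) - v p))
      = ∑ p : ZMod m × ZMod n, 2 *
        ((A (p.1 + 1, p.2) - A p) * (v (p.1 + 1, p.2) - v p)
          + (A (p.1, p.2 + 1) - A p) * (v (p.1, p.2 + 1) - v p)) := by
        rw [Finset.mul_sum]
    _ ≤ ∑ p : ZMod m × ZMod n,
        ((1 / α) * ((A (p.1 + 1, p.2) - A p) ^ 2 + (A (p.1, p.2 + 1) - A p) ^ 2)
          + α * ((v (p.1 + 1, p.2) - v p) ^ 2 + (v (p.1, p.2 + 1) - v p) ^ 2)) :=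
        Finset.sum_le_sum (fun p _ => stmt15_young hα)
    _ = (1 / α) * (∑ p : ZMod m × ZMod n,
          ((A (p.1 + 1, p.2) - A p) ^ 2 + (A (p.1, p.2 + 1) - A p) ^ 2))
        + α * gradNormSq v := by
        rw [Finset.sum_add_distrib, ← Finset.mul_sum, ← Finset.mul_sum, hG]
    _ ≤ (1 / α) * (2 * K ^ 2 * (L₁ * L₂) ^ 2 * (h ^ 2 * Se)) + α * gradNormSq v := by
        have := mul_le_mul_of_nonneg_left hgradA (by positivity : (0:ℝ) ≤ 1 / α)
        linarith
    _ ≤ (1 / α) * (2 * K ^ 2 * (L₁ * L₂) ^ 2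
          * (5 * (norm2sq h ek + norm2sq h ekm))) + α * gradNormSq v := by
        have h1 : 2 * K ^ 2 * (L₁ * L₂) ^ 2 * (h ^ 2 * Se)
            ≤ 2 * K ^ 2 * (L₁ * L₂) ^ 2 * (5 * (norm2sq h ek + norm2sq h ekm)) :=
          mul_le_mul_of_nonneg_left hSeN (by positivity)
        have := mul_le_mul_of_nonneg_left h1 (by positivity : (0:ℝ) ≤ 1 / α)
        linarith
    _ ≤ (10 * K ^ 2 * (L₁ * L₂) ^ 2 + 1) / α * (norm2sq h ek + norm2sq h ekm)
        + α * gradNormSq v := by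
        have heq1 : (1 / α) * (2 * K ^ 2 * (L₁ * L₂) ^ 2
            * (5 * (norm2sq h ek + norm2sq h ekm)))
            = (10 * K ^ 2 * (L₁ * L₂) ^ 2) / α * (norm2sq h ek + norm2sq h ekm) := by
          field_simp; ring
        have h2 : (10 * K ^ 2 * (L₁ * L₂) ^ 2) / α * (norm2sq h ek + norm2sq h ekm)
            ≤ (10 * K ^ 2 * (L₁ * L₂) ^ 2 + 1) / α * (norm2sq h ek + norm2sq h ekm) :=
          mul_le_mul_of_nonneg_right
            ((div_le_div_iff_of_pos_right hα).mpr (by linarith)) (by linarith)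
        rw [heq1]
        linarith
end
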